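/- arXiv:1412.6081 — 9 statements merged into one kernel-verified Lean document; each statement's English description precedes it below -/
import Mathlib

section
/- Let μ₁, μ₂, τ₁, τ₂, η, σ ∈ ℂ with σ ≠ 0, η ≠ 0 and τ₁ ≠ τ₂. Set p₁ = σ and p₂ = μ₁μ₂/σ. Then the Bethe (vacuum) equation τ₁(μ₁ − ησ)(μ₂ − ησ) = τ₂(ημ₁ − σ)(ημ₂ − σ) holds if and only if ((ητ₁ − η⁻¹τ₂)/(τ₁ − τ₂))·p₁ + ((ητ₂ − η⁻¹τ₁)/(τ₂ − τ₁))·p₂ = μ₁ + μ₂. (Moreover p₁p₂ = μ₁μ₂ holds by construction, so the Bethe equation for T[U(2)] is equivalent to the two-body trigonometric Ruijsenaars–Schneider spectral relations in the electric frame.) -/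
variable {K : Type*} [Field K]

/-- The two-body trigonometric Ruijsenaars–Schneider Hamiltonian, as a function of the momenta. -/
def rsHamiltonian (τ₁ τ₂ η p₁ p₂ : K) : K :=
  (η * τ₁ - η⁻¹ * τ₂) / (τ₁ - τ₂) * p₁ + (η * τ₂ - η⁻¹ * τ₁) / (τ₂ - τ₁) * p₂

theorem bethe_sub_eq_mul_sub_rsHamiltonian {μ₁ μ₂ τ₁ τ₂ η σ : K} (hσ : σ ≠ 0) (hη : η ≠ 0)
    (hτ : τ₁ ≠ τ₂) :
    τ₁ * (μ₁ - η * σ) * (μ₂ - η * σ) - τ₂ * (η * μ₁ - σ) * (η * μ₂ - σ) =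
      η * σ * (τ₂ - τ₁) * (μ₁ + μ₂ - rsHamiltonian τ₁ τ₂ η σ (μ₁ * μ₂ / σ)) := by
  have hτ₁₂ : τ₁ - τ₂ ≠ 0 := sub_ne_zero.2 hτ
  have hτ₂₁ : τ₂ - τ₁ ≠ 0 := sub_ne_zero.2 hτ.symm
  unfold rsHamiltonian
  field_simp
  ring

theorem bethe_iff_rsHamiltonian_eq {μ₁ μ₂ τ₁ τ₂ η σ : K} (hσ : σ ≠ 0) (hη : η ≠ 0)
    (hτ : τ₁ ≠ τ₂) :
    τ₁ * (μ₁ - η * σ) * (μ₂ - η * σ) = τ₂ * (η * μ₁ - σ) * (η * μ₂ - σ) ↔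
      rsHamiltonian τ₁ τ₂ η σ (μ₁ * μ₂ / σ) = μ₁ + μ₂ := by
  have hfactor : η * σ * (τ₂ - τ₁) ≠ 0 := by simp [hσ, hη, sub_ne_zero.2 hτ.symm]
  rw [← sub_eq_zero, bethe_sub_eq_mul_sub_rsHamiltonian hσ hη hτ, mul_eq_zero,
    or_iff_right hfactor, sub_eq_zero, eq_comm]

/-- **Electric frame for T[U(2)]**: with momenta `p₁ = σ`, `p₂ = μ₁μ₂/σ`, the Bethe
equation is equivalent to the two-body trigonometric Ruijsenaars–Schneider relation,
and `p₁ p₂ = μ₁ μ₂` holds by construction. -/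
theorem tu2_electric_frame (μ₁ μ₂ τ₁ τ₂ η σ : ℂ) (hσ : σ ≠ 0) (hη : η ≠ 0)
    (hτ : τ₁ ≠ τ₂) :
    (τ₁ * (μ₁ - η * σ) * (μ₂ - η * σ) = τ₂ * (η * μ₁ - σ) * (η * μ₂ - σ) ↔
      (η * τ₁ - η⁻¹ * τ₂) / (τ₁ - τ₂) * σ +
        (η * τ₂ - η⁻¹ * τ₁) / (τ₂ - τ₁) * (μ₁ * μ₂ / σ) = μ₁ + μ₂) ∧
    σ * (μ₁ * μ₂ / σ) = μ₁ * μ₂ :=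
  ⟨bethe_iff_rsHamiltonian_eq hσ hη hτ, mul_div_cancel₀ _ hσ⟩
end

section
/- Let μ₁, μ₂, τ₁, τ₂, η, σ ∈ ℂ with η ≠ 0, μ₁ ≠ μ₂, μ₁ ≠ ησ and μ₂ ≠ ησ. Define p¹ = τ₂(ημ₁ − σ)/(μ₁ − ησ) and p² = τ₂(ημ₂ − σ)/(μ₂ − ησ). If the Bethe equation τ₁(μ₁ − ησ)(μ₂ − ησ) = τ₂(ημ₁ − σ)(ημ₂ − σ) holds, then ((μ₁η⁻¹ − μ₂η)/(μ₁ − μ₂))·p¹ + ((μ₂η⁻¹ − μ₁η)/(μ₂ − μ₁))·p² = τ₁ + τ₂ and p¹·p² = τ₁·τ₂. -/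
/-!
Write `Aⱼ = ημⱼ − σ` and `Bⱼ = μⱼ − ησ`, so that `pʲ = τ₂ Aⱼ / Bⱼ`. Identically in the
parameters, the weighted sum of the momenta is `τ₂ (A₁A₂ + B₁B₂) / (B₁B₂)`. The Bethe equation
says `τ₂ A₁A₂ = τ₁ B₁B₂`, which turns this sum into `τ₁ + τ₂` and the product `p¹p²` into `τ₁τ₂`.
-/

variable {K : Type*} [Field K]

def magneticMomentum (τ₂ η σ μ : K) : K := τ₂ * (η * μ - σ) / (μ - η * σ)

theorem magneticMomentum_mul (τ₁ τ₂ η σ μ₁ μ₂ : K) (h1 : μ₁ ≠ η * σ) (h2 : μ₂ ≠ η * σ)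
    (hbethe : τ₁ * (μ₁ - η * σ) * (μ₂ - η * σ) = τ₂ * (η * μ₁ - σ) * (η * μ₂ - σ)) :
    magneticMomentum τ₂ η σ μ₁ * magneticMomentum τ₂ η σ μ₂ = τ₁ * τ₂ := by
  rw [magneticMomentum, magneticMomentum, div_mul_div_comm,
    div_eq_iff (mul_ne_zero (sub_ne_zero.mpr h1) (sub_ne_zero.mpr h2))]
  linear_combination -τ₂ * hbethe

theorem magneticMomentum_weighted_sum_eq (τ₂ η σ μ₁ μ₂ : K) (hη : η ≠ 0) (hμ : μ₁ ≠ μ₂)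
    (h1 : μ₁ ≠ η * σ) (h2 : μ₂ ≠ η * σ) :
    (μ₁ * η⁻¹ - μ₂ * η) / (μ₁ - μ₂) * magneticMomentum τ₂ η σ μ₁ +
      (μ₂ * η⁻¹ - μ₁ * η) / (μ₂ - μ₁) * magneticMomentum τ₂ η σ μ₂ =
    τ₂ * ((η * μ₁ - σ) * (η * μ₂ - σ) + (μ₁ - η * σ) * (μ₂ - η * σ)) /
      ((μ₁ - η * σ) * (μ₂ - η * σ)) := by
  have hB₁ : μ₁ - η * σ ≠ 0 := sub_ne_zero.mpr h1
  have hB₂ : μ₂ - η * σ ≠ 0 := sub_ne_zero.mpr h2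
  have hμ₁₂ : μ₁ - μ₂ ≠ 0 := sub_ne_zero.mpr hμ
  have hμ₂₁ : μ₂ - μ₁ ≠ 0 := sub_ne_zero.mpr hμ.symm
  unfold magneticMomentum
  field_simp
  ring

theorem magneticMomentum_weighted_sum (τ₁ τ₂ η σ μ₁ μ₂ : K) (hη : η ≠ 0) (hμ : μ₁ ≠ μ₂)
    (h1 : μ₁ ≠ η * σ) (h2 : μ₂ ≠ η * σ)
    (hbethe : τ₁ * (μ₁ - η * σ) * (μ₂ - η * σ) = τ₂ * (η * μ₁ - σ) * (η * μ₂ - σ)) :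
    (μ₁ * η⁻¹ - μ₂ * η) / (μ₁ - μ₂) * magneticMomentum τ₂ η σ μ₁ +
      (μ₂ * η⁻¹ - μ₁ * η) / (μ₂ - μ₁) * magneticMomentum τ₂ η σ μ₂ = τ₁ + τ₂ := by
  have hB : (μ₁ - η * σ) * (μ₂ - η * σ) ≠ 0 :=
    mul_ne_zero (sub_ne_zero.mpr h1) (sub_ne_zero.mpr h2)
  rw [magneticMomentum_weighted_sum_eq τ₂ η σ μ₁ μ₂ hη hμ h1 h2, div_eq_iff hB]
  linear_combination -hbethe

/-- **Magnetic frame for T[U(2)]**: with momenta `p¹ = τ₂(ημ₁−σ)/(μ₁−ησ)` and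
`p² = τ₂(ημ₂−σ)/(μ₂−ησ)`, the Bethe equation implies the two-body trigonometric
Ruijsenaars–Schneider relations in the magnetic frame. -/
theorem tu2_magnetic_frame (μ₁ μ₂ τ₁ τ₂ η σ : ℂ) (hη : η ≠ 0) (hμ : μ₁ ≠ μ₂)
    (h1 : μ₁ ≠ η * σ) (h2 : μ₂ ≠ η * σ)
    (hbethe : τ₁ * (μ₁ - η * σ) * (μ₂ - η * σ) = τ₂ * (η * μ₁ - σ) * (η * μ₂ - σ)) :
    (μ₁ * η⁻¹ - μ₂ * η) / (μ₁ - μ₂) * (τ₂ * (η * μ₁ - σ) / (μ₁ - η * σ)) +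
      (μ₂ * η⁻¹ - μ₁ * η) / (μ₂ - μ₁) * (τ₂ * (η * μ₂ - σ) / (μ₂ - η * σ)) = τ₁ + τ₂ ∧
    (τ₂ * (η * μ₁ - σ) / (μ₁ - η * σ)) * (τ₂ * (η * μ₂ - σ) / (μ₂ - η * σ)) = τ₁ * τ₂ :=
  ⟨magneticMomentum_weighted_sum τ₁ τ₂ η σ μ₁ μ₂ hη hμ h1 h2 hbethe,
    magneticMomentum_mul τ₁ τ₂ η σ μ₁ μ₂ h1 h2 hbethe⟩
end

section
/- Let P, Q₋, Q, Q₊, Q̃ be polynomials over ℂ, let τ, τ', η ∈ ℂ with η ≠ 0 and τ ≠ τ', and suppose the functional equation τ'·Q(ηu)·Q̃(η⁻¹u) − τ·Q(η⁻¹u)·Q̃(ηu) = (τ' − τ)·P(u)·Q₋(u)·Q₊(u) holds for all u ∈ ℂ. If σ ∈ ℂ satisfies Q(σ) = 0 and Q̃(σ) ≠ 0, then τ'·Q(η²σ)·P(η⁻¹σ)·Q₋(η⁻¹σ)·Q₊(η⁻¹σ) + τ·Q(η⁻²σ)·P(ησ)·Q₋(ησ)·Q₊(ησ) = 0. -/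
/-- The QQ̃ functional relation of a 3d N=4 linear quiver implies the Bethe
equation at every root `σ` of `Q` (at which the auxiliary polynomial `Q̃` does
not vanish). -/
theorem QQtilde_implies_bethe (P Qm Q Qp Qt : Polynomial ℂ) (τ τ' η : ℂ)
    (hη : η ≠ 0) (hτ : τ ≠ τ')
    (hfe : ∀ u : ℂ,
      τ' * Q.eval (η * u) * Qt.eval (η⁻¹ * u) - τ * Q.eval (η⁻¹ * u) * Qt.eval (η * u) =
        (τ' - τ) * (P.eval u * (Qm.eval u * Qp.eval u)))
    (σ : ℂ) (h0 : Q.eval σ = 0) (h1 : Qt.eval σ ≠ 0) :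
    τ' * Q.eval (η ^ 2 * σ) *
        (P.eval (η⁻¹ * σ) * (Qm.eval (η⁻¹ * σ) * Qp.eval (η⁻¹ * σ))) +
      τ * Q.eval ((η ^ 2)⁻¹ * σ) *
        (P.eval (η * σ) * (Qm.eval (η * σ) * Qp.eval (η * σ))) = 0 := by
  have hA := hfe (η * σ)
  have hB := hfe (η⁻¹ * σ)
  rw [show η⁻¹ * (η * σ) = σ by field_simp,
      show η * (η * σ) = η ^ 2 * σ by ring] at hA
  rw [show η * (η⁻¹ * σ) = σ by field_simp,
      show η⁻¹ * (η⁻¹ * σ) = (η ^ 2)⁻¹ * σ by rw [sq]; rw [mul_inv]; ring] at hB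
  simp only [h0, mul_zero, zero_mul, sub_zero, zero_sub] at hA hB
  have hc : (τ' - τ) * Qt.eval σ ≠ 0 :=
    mul_ne_zero (sub_ne_zero.mpr (Ne.symm hτ)) h1
  apply mul_left_cancel₀ hc
  rw [mul_zero]
  linear_combination
    ((τ' - τ) * (P.eval (η⁻¹ * σ) * (Qm.eval (η⁻¹ * σ) * Qp.eval (η⁻¹ * σ)))) * hA -
    ((τ' - τ) * (P.eval (η * σ) * (Qm.eval (η * σ) * Qp.eval (η * σ)))) * hB
end

section
/- Fix N ≥ 2, complex numbers p₁, …, p_N, pairwise distinct complex numbers τ₁, …, τ_N, and η ∈ ℂ with η ≠ 0. For indices i₁ < … < i_j from {1, …, N}, let M_{i₁,…,i_j}(u) be the j×j matrix with (a,c) entry τ_{i_a}^{c−1}·(η^{j+1−2c}u − p_{i_a}), and let M⁰_{i₁,…,i_j} be the j×j matrix with (a,c) entry τ_{i_a}^{c−1}. Define Q₀(u) = 1, Q_j(u) = det M_{1,…,j}(u)/det M⁰_{1,…,j} for 1 ≤ j ≤ N, and Q̃_j(u) = det M_{1,…,j−1,j+1}(u)/det M⁰_{1,…,j−1,j+1}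 for 1 ≤ j ≤ N−1. Then each Q_j is a monic polynomial of degree j in u, and for every 1 ≤ j ≤ N−1 and every u ∈ ℂ one has τ_{j+1}·Q_j(ηu)·Q̃_j(η⁻¹u) − τ_j·Q_j(η⁻¹u)·Q̃_j(ηu) = (τ_{j+1} − τ_j)·Q_{j−1}(u)·Q_{j+1}(u). -/
/-- The j×j matrix `M_{s(1),…,s(j)}(u)` with (a,c) entry
`τ_{s a}^{c-1} (η^{j+1-2c} u − p_{s a})` (here `c` is 0-indexed). -/
noncomputable def rsM {N : ℕ} (p τ : Fin N → ℂ) (η u : ℂ) {j : ℕ} (s : Fin j → Fin N) :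
    Matrix (Fin j) (Fin j) ℂ :=
  Matrix.of fun a c => τ (s a) ^ (c : ℕ) * (η ^ ((j : ℤ) - 1 - 2 * (c : ℕ)) * u - p (s a))

/-- The Vandermonde-type matrix `M⁰_{s(1),…,s(j)}` with (a,c) entry `τ_{s a}^{c-1}`. -/
noncomputable def rsM0 {N : ℕ} (τ : Fin N → ℂ) {j : ℕ} (s : Fin j → Fin N) :
    Matrix (Fin j) (Fin j) ℂ :=
  Matrix.of fun a c => τ (s a) ^ (c : ℕ)

/-- Row selection `{1,…,j}` (0-indexed: `{0,…,j-1}`). -/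
def selQ {N : ℕ} (j : ℕ) (h : j ≤ N) : Fin j → Fin N :=
  fun a => ⟨a, lt_of_lt_of_le a.2 h⟩

/-- Row selection `{1,…,j-1, j+1}` (0-indexed: `{0,…,j-2, j}`). -/
def selQt {N : ℕ} (j : ℕ) (h : j < N) : Fin j → Fin N :=
  fun a => if (a : ℕ) = j - 1 then ⟨j, h⟩ else ⟨a, lt_trans a.2 h⟩

/-- `Q_j(u) = det M_{1,…,j}(u) / det M⁰_{1,…,j}`. -/
noncomputable def Qdet {N : ℕ} (p τ : Fin N → ℂ) (η : ℂ) (j : ℕ) (h : j ≤ N) (u : ℂ) : ℂ :=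
  (rsM p τ η u (selQ j h)).det / (rsM0 τ (selQ j h)).det

/-- `Q̃_j(u) = det M_{1,…,j-1,j+1}(u) / det M⁰_{1,…,j-1,j+1}`. -/
noncomputable def Qtdet {N : ℕ} (p τ : Fin N → ℂ) (η : ℂ) (j : ℕ) (h : j < N) (u : ℂ) : ℂ :=
  (rsM p τ η u (selQt j h)).det / (rsM0 τ (selQt j h)).det

/-!
`Q_j(u)` is `det (u • A + B) / det M⁰`, where `A` is the Vandermonde matrix `M⁰` times the diagonal
matrix of the powers `η^(j+1-2c)`. These exponents add up to zero, so `det A = det M⁰` and `Q_j` is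
monic of degree `j`.

For the QQ̃ relation, look at `M = M_{1,…,j+1}(u)`. Dropping its last column gives the matrix
`M(ηu)` of size `j`. Dropping its first column gives the matrix `M(η⁻¹u)` of size `j`, with row `a`
multiplied by `τ_a`. So the Desnanot–Jacobi identity for the last two rows and the first and last
columns of `M` is the QQ̃ relation for the numerators, multiplied by `τ_1 ⋯ τ_{j-1}`. This factor
goes away if we shift every `τ_i` by a generic `ε` and let `ε → 0`. Taking `p = 0` and `η = u = 1`
in the same identity gives the matching relation between the Vandermonde denominators.
-/

open Matrix

theorem Fin.snoc_comp_castSucc_succAbove {α : Type*} {k : ℕ} (h : Fin (k + 1) → α) (z : α)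
    (i : Fin (k + 1)) :
    (Fin.snoc h z : Fin (k + 2) → α) ∘ i.castSucc.succAbove = Fin.snoc (h ∘ i.succAbove) z := by
  funext t
  refine Fin.lastCases ?_ (fun s => ?_) t
  · rw [Function.comp_apply, Fin.succAbove_of_le_castSucc _ _
      (Fin.castSucc_le_castSucc_iff.2 (Fin.le_last i)), Fin.succ_last, Fin.snoc_last, Fin.snoc_last]
  · simp

namespace Matrix

variable {R : Type*} [CommRing R]

theorem sum_neg_one_pow_mul_det_succAbove_smul_eq_zero {n : ℕ} (v : Fin (n + 1) → Fin n → R) :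
    ∑ i : Fin (n + 1), ((-1) ^ (i : ℕ) * (of fun a => v (i.succAbove a)).det) • v i = 0 := by
  funext c
  have hcol : (of fun k => (Fin.cons (v k c) (v k) : Fin (n + 1) → R)).det = 0 :=
    det_zero_of_column_eq (Fin.succ_ne_zero c).symm fun k => by simp
  rw [det_succ_column_zero] at hcol
  simpa [Finset.sum_apply, mul_comm, mul_left_comm, mul_assoc, submatrix] using hcol

theorem det_of_snoc_pluecker {n : ℕ} (ws : Fin n → Fin (n + 2) → R) (a b c d : Fin (n + 2) → R) :
    (of (Fin.snoc (Fin.snoc ws b) c)).det * (of (Fin.snoc (Fin.snoc ws a) d)).det -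
        (of (Fin.snoc (Fin.snoc ws a) c)).det * (of (Fin.snoc (Fin.snoc ws b) d)).det +
        (of (Fin.snoc (Fin.snoc ws a) b)).det * (of (Fin.snoc (Fin.snoc ws c) d)).det = 0 := by
  set v : Fin (n + 3) → Fin (n + 2) → R := Fin.snoc (Fin.snoc (Fin.snoc ws a) b) c
  let L : (Fin (n + 2) → R) →ₗ[R] R :=
    detRowAlternating.toMultilinearMap.toLinearMap (Fin.snoc (Fin.snoc ws 0) d)
      (Fin.last n).castSucc
  have hL : ∀ x, L x = (of (Fin.snoc (Fin.snoc ws x) d)).det := by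
    intro x
    simp only [L, MultilinearMap.toLinearMap_apply, ← Fin.snoc_update, Fin.update_snoc_last]
    rfl
  have hL_ws : ∀ i, L (ws i) = 0 := fun i => by
    rw [hL]
    exact det_zero_of_row_eq ((Fin.castSucc_injective _).ne (Fin.castSucc_lt_last i).ne)
      (funext fun _ => by simp)
  have hcramer := congrArg L (sum_neg_one_pow_mul_det_succAbove_smul_eq_zero v)
  simp only [map_sum, map_smul, map_zero, smul_eq_mul] at hcramer
  rw [Fin.sum_univ_castSucc, Fin.sum_univ_castSucc, Fin.sum_univ_castSucc,
    Finset.sum_eq_zero fun i _ => by simp [v, hL_ws]] at hcramer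
  have hc : v ∘ (Fin.last (n + 2)).succAbove = Fin.snoc (Fin.snoc ws a) b := by
    rw [Fin.succAbove_last]; exact Fin.snoc_comp_castSucc
  have hb : v ∘ (Fin.last (n + 1)).castSucc.succAbove = Fin.snoc (Fin.snoc ws a) c := by
    rw [Fin.snoc_comp_castSucc_succAbove, Fin.succAbove_last, Fin.snoc_comp_castSucc]
  have ha : v ∘ (Fin.last n).castSucc.castSucc.succAbove = Fin.snoc (Fin.snoc ws b) c := by
    rw [Fin.snoc_comp_castSucc_succAbove, Fin.snoc_comp_castSucc_succAbove, Fin.succAbove_last,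
      Fin.snoc_comp_castSucc]
  simp only [← Function.comp_def v, ha, hb, hc, hL, v, Fin.snoc_last, Fin.snoc_castSucc, zero_add,
    Fin.val_castSucc, Fin.val_last, pow_succ] at hcramer
  rcases neg_one_pow_eq_or R n with h | h <;> rw [h] at hcramer
  · linear_combination hcramer
  · linear_combination -hcramer

theorem det_of_snoc_single {n : ℕ} (U : Fin n → Fin (n + 1) → R) (k : Fin (n + 1)) :
    (of (Fin.snoc U (Pi.single k 1))).det =
      (-1) ^ (n + (k : ℕ)) * ((of U).submatrix id k.succAbove).det := by
  have hrow : of (Fin.snoc U (Pi.single k 1)) =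
      (of (Fin.snoc U 0)).updateRow (Fin.last n) (Pi.single k 1) := by
    rw [updateRow, ← Fin.update_snoc_last]; rfl
  rw [hrow, ← adjugate_apply, adjugate_fin_succ_eq_det_submatrix, Fin.val_last, Fin.succAbove_last]
  congr 2
  ext i j
  simp

theorem det_of_snoc_desnanot_jacobi {n : ℕ} (ws : Fin n → Fin (n + 2) → R)
    (a b : Fin (n + 2) → R) :
    (of (Fin.snoc (Fin.snoc ws a) b)).det * ((of ws).submatrix id (Fin.castSucc ∘ Fin.succ)).det =
      ((of (Fin.snoc ws b)).submatrix id Fin.succ).det *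
          ((of (Fin.snoc ws a)).submatrix id Fin.castSucc).det -
        ((of (Fin.snoc ws b)).submatrix id Fin.castSucc).det *
          ((of (Fin.snoc ws a)).submatrix id Fin.succ).det := by
  have key := det_of_snoc_pluecker ws a b (Pi.single 0 1) (Pi.single (Fin.last _) 1)
  have hsign : (-1 : R) ^ (n + 1 + (n + 1)) = 1 := Even.neg_one_pow ⟨n + 1, rfl⟩
  have hcorner : (of (Fin.snoc (Fin.snoc ws (Pi.single 0 1)) (Pi.single (Fin.last _) 1))).det =
      (-1) ^ n * ((of ws).submatrix id (Fin.castSucc ∘ Fin.succ)).det := by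
    have hsub : (of (Fin.snoc ws (Pi.single 0 1))).submatrix id Fin.castSucc =
        of (Fin.snoc (fun i => ws i ∘ Fin.castSucc) (Pi.single 0 1)) := by
      ext i j
      refine Fin.lastCases ?_ (fun i => ?_) i
      · simp [Pi.single_apply, Fin.castSucc_eq_zero_iff]
      · simp
    rw [det_of_snoc_single, Fin.succAbove_last, hsub, det_of_snoc_single, Fin.val_last, hsign,
      Fin.succAbove_zero, Fin.val_zero, add_zero, one_mul]
    rfl
  simp only [det_of_snoc_single, hcorner, Fin.succAbove_zero, Fin.succAbove_last, Fin.val_zero,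
    Fin.val_last, add_zero, hsign, pow_succ] at key
  rcases neg_one_pow_eq_or R n with h | h <;> rw [h] at key
  · linear_combination key
  · linear_combination -key

end Matrix

theorem prod_zpow_sub_one_sub_two_mul {η : ℂ} (hη : η ≠ 0) (j : ℕ) :
    ∏ c : Fin j, η ^ ((j : ℤ) - 1 - 2 * (c : ℕ)) = 1 := by
  have hrev : ∀ c : Fin j, (j : ℤ) - 1 - 2 * (c.rev : ℕ) = -((j : ℤ) - 1 - 2 * (c : ℕ)) := by
    intro c
    have := c.isLt
    rw [Fin.val_rev]
    omega
  refine Finset.prod_involution (fun c _ => c.rev) (fun c _ => ?_) (fun c _ hc hrc => hc ?_)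
    (fun c _ => Finset.mem_univ _) (fun c _ => Fin.rev_rev c)
  · rw [hrev, _root_.zpow_neg, mul_inv_cancel₀ (zpow_ne_zero _ hη)]
  · have := hrev c
    rw [hrc] at this
    rw [show (j : ℤ) - 1 - 2 * (c : ℕ) = 0 by omega, zpow_zero]

open Polynomial in
theorem exists_monic_eval_eq_det_smul_add_div {n K : Type*} [Fintype n] [DecidableEq n] [Field K]
    (A B : Matrix n n K) (hA : A.det ≠ 0) :
    ∃ R : K[X], R.Monic ∧ R.natDegree = Fintype.card n ∧
      ∀ u, R.eval u = (u • A + B).det / A.det := by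
  set P : K[X] := det ((X : K[X]) • A.map C + B.map C)
  have hcoeff : (C A.det⁻¹ * P).coeff (Fintype.card n) = 1 := by
    rw [coeff_C_mul, coeff_det_X_add_C_card, inv_mul_cancel₀ hA]
  have hdeg : (C A.det⁻¹ * P).natDegree ≤ Fintype.card n :=
    (natDegree_C_mul_le _ _).trans (natDegree_det_X_add_C_le A B)
  refine ⟨C A.det⁻¹ * P, monic_of_natDegree_le_of_coeff_eq_one _ hdeg hcoeff,
    natDegree_eq_of_le_of_coeff_ne_zero hdeg (by rw [hcoeff]; exact one_ne_zero), fun u => ?_⟩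
  rw [eval_mul, eval_C, inv_mul_eq_div, ← coe_evalRingHom, RingHom.map_det]
  congr 2
  ext
  simp only [RingHom.mapMatrix_apply, map_apply, Matrix.add_apply, Matrix.smul_apply, smul_eq_mul,
    coe_evalRingHom, eval_add, eval_mul, eval_X, eval_C]

noncomputable def rsRow {N : ℕ} (p τ : Fin N → ℂ) (η u : ℂ) (j : ℕ) (i : Fin N) : Fin j → ℂ :=
  fun c => τ i ^ (c : ℕ) * (η ^ ((j : ℤ) - 1 - 2 * (c : ℕ)) * u - p i)

section

variable {N : ℕ} (p τ : Fin N → ℂ) {η : ℂ} (u : ℂ)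

theorem rsM_eq_of_rsRow {j : ℕ} (s : Fin j → Fin N) :
    rsM p τ η u s = of (rsRow p τ η u j ∘ s) := rfl

theorem rsM_eq_smul_add {j : ℕ} (s : Fin j → Fin N) :
    rsM p τ η u s = u • (rsM0 τ s * diagonal fun c : Fin j => η ^ ((j : ℤ) - 1 - 2 * (c : ℕ))) +
      -of fun a (c : Fin j) => τ (s a) ^ (c : ℕ) * p (s a) := by
  ext
  simp [rsM, rsM0, mul_diagonal]
  ring

theorem exists_monic_eval_eq_det_rsM_div (hη : η ≠ 0) {j : ℕ} (s : Fin j → Fin N)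
    (hs : (rsM0 τ s).det ≠ 0) :
    ∃ R : Polynomial ℂ, R.Monic ∧ R.natDegree = j ∧
      ∀ u, R.eval u = (rsM p τ η u s).det / (rsM0 τ s).det := by
  have hdet : (rsM0 τ s * diagonal fun c : Fin j => η ^ ((j : ℤ) - 1 - 2 * (c : ℕ))).det =
      (rsM0 τ s).det := by
    rw [det_mul, det_diagonal, prod_zpow_sub_one_sub_two_mul hη, mul_one]
  obtain ⟨R, hR, hdeg, heval⟩ := exists_monic_eval_eq_det_smul_add_div _
    (-of fun a (c : Fin j) => τ (s a) ^ (c : ℕ) * p (s a)) (hdet ▸ hs)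
  refine ⟨R, hR, by simpa using hdeg, fun u => ?_⟩
  rw [heval, hdet, rsM_eq_smul_add]

theorem rsRow_comp_castSucc (hη : η ≠ 0) (k : ℕ) (i : Fin N) :
    rsRow p τ η u (k + 1) i ∘ Fin.castSucc = rsRow p τ η (η * u) k i := by
  funext c
  simp only [rsRow, Function.comp_apply, Fin.val_castSucc]
  rw [show ((k + 1 : ℕ) : ℤ) - 1 - 2 * (c : ℕ) = ((k : ℤ) - 1 - 2 * (c : ℕ)) + 1 by push_cast; ring,
    zpow_add_one₀ hη]
  ring

theorem rsRow_comp_succ (hη : η ≠ 0) (k : ℕ) (i : Fin N) :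
    rsRow p τ η u (k + 1) i ∘ Fin.succ = τ i • rsRow p τ η (η⁻¹ * u) k i := by
  funext c
  simp only [rsRow, Function.comp_apply, Fin.val_succ, Pi.smul_apply, smul_eq_mul]
  rw [show ((k + 1 : ℕ) : ℤ) - 1 - 2 * ((c : ℕ) + 1 : ℕ) = ((k : ℤ) - 1 - 2 * (c : ℕ)) - 1 by
    push_cast; ring, zpow_sub_one₀ hη, pow_succ]
  ring

theorem submatrix_castSucc_of_rsRow (hη : η ≠ 0) {k l : ℕ} (t : Fin l → Fin N) :
    (of (rsRow p τ η u (k + 1) ∘ t)).submatrix id Fin.castSucc =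
      of (rsRow p τ η (η * u) k ∘ t) := by
  ext r c
  exact congrFun (rsRow_comp_castSucc p τ u hη k (t r)) c

theorem det_submatrix_succ_of_rsRow (hη : η ≠ 0) {k : ℕ} (t : Fin k → Fin N) :
    ((of (rsRow p τ η u (k + 1) ∘ t)).submatrix id Fin.succ).det =
      (∏ r, τ (t r)) * (rsM p τ η (η⁻¹ * u) t).det := by
  rw [← det_mul_column]
  congr 1
  ext r c
  exact congrFun (rsRow_comp_succ p τ u hη k (t r)) c

theorem prod_mul_QQtilde_det_rsM (hη : η ≠ 0) {m : ℕ} (s : Fin m → Fin N) (a b : Fin N) :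
    (∏ r, τ (s r)) * ((rsM p τ η u (Fin.snoc (Fin.snoc s a) b)).det * (rsM p τ η u s).det) =
      (∏ r, τ (s r)) * (τ b * (rsM p τ η (η * u) (Fin.snoc s a)).det *
          (rsM p τ η (η⁻¹ * u) (Fin.snoc s b)).det -
        τ a * (rsM p τ η (η⁻¹ * u) (Fin.snoc s a)).det *
          (rsM p τ η (η * u) (Fin.snoc s b)).det) := by
  set W := rsRow p τ η u (m + 2)
  have key := det_of_snoc_desnanot_jacobi (W ∘ s) (W a) (W b)
  simp only [← Fin.comp_snoc] at key
  have hcorner : (of (W ∘ s)).submatrix id (Fin.castSucc ∘ Fin.succ) =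
      ((of (W ∘ s)).submatrix id Fin.castSucc).submatrix id Fin.succ := rfl
  rw [hcorner, submatrix_castSucc_of_rsRow p τ u hη, det_submatrix_succ_of_rsRow _ _ _ hη,
    inv_mul_cancel_left₀ hη, det_submatrix_succ_of_rsRow _ _ _ hη,
    det_submatrix_succ_of_rsRow _ _ _ hη, submatrix_castSucc_of_rsRow p τ u hη,
    submatrix_castSucc_of_rsRow p τ u hη] at key
  simp only [Fin.prod_univ_castSucc, Fin.snoc_castSucc, Fin.snoc_last, rsM_eq_of_rsRow] at key ⊢
  linear_combination key

theorem QQtilde_det_rsM (hη : η ≠ 0) {m : ℕ} (s : Fin m → Fin N) (a b : Fin N) :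
    τ b * (rsM p τ η (η * u) (Fin.snoc s a)).det * (rsM p τ η (η⁻¹ * u) (Fin.snoc s b)).det -
        τ a * (rsM p τ η (η⁻¹ * u) (Fin.snoc s a)).det * (rsM p τ η (η * u) (Fin.snoc s b)).det =
      (rsM p τ η u (Fin.snoc (Fin.snoc s a) b)).det * (rsM p τ η u s).det := by
  let F : ℂ → ℂ := fun ε =>
    let τ' := fun i => τ i + ε
    τ' b * (rsM p τ' η (η * u) (Fin.snoc s a)).det * (rsM p τ' η (η⁻¹ * u) (Fin.snoc s b)).det -
      τ' a * (rsM p τ' η (η⁻¹ * u) (Fin.snoc s a)).det * (rsM p τ' η (η * u) (Fin.snoc s b)).det -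
      (rsM p τ' η u (Fin.snoc (Fin.snoc s a) b)).det * (rsM p τ' η u s).det
  have hF : Continuous F := by
    simp only [F, rsM]
    fun_prop
  have hF_eq : ∀ ε ∈ (Set.range fun i => -τ i)ᶜ, F ε = 0 := by
    intro ε hε
    have hT : ∏ r, (τ (s r) + ε) ≠ 0 :=
      Finset.prod_ne_zero_iff.2 fun r _ h => hε ⟨s r, by linear_combination -h⟩
    have := mul_left_cancel₀ hT (prod_mul_QQtilde_det_rsM p (fun i => τ i + ε) u hη s a b)
    simp only [F]
    linear_combination -this
  have hF_zero := congrFun (Continuous.ext_on ((Set.finite_range _).countable.dense_compl ℂ) hF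
    continuous_const hF_eq) 0
  simp only [F, add_zero] at hF_zero
  linear_combination hF_zero

theorem det_rsM0_snoc_snoc_mul_det_rsM0 {m : ℕ} (s : Fin m → Fin N) (a b : Fin N) :
    (rsM0 τ (Fin.snoc (Fin.snoc s a) b)).det * (rsM0 τ s).det =
      (τ b - τ a) * (rsM0 τ (Fin.snoc s a)).det * (rsM0 τ (Fin.snoc s b)).det := by
  have hM0 : ∀ {j : ℕ} (t : Fin j → Fin N), rsM 0 τ 1 1 t = rsM0 τ t := fun t => by
    ext; simp [rsM, rsM0]
  have h := QQtilde_det_rsM 0 τ 1 one_ne_zero s a b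
  simp only [mul_one, inv_one, hM0] at h
  linear_combination -h

end

theorem selQ_succ {N j : ℕ} (h : j + 1 ≤ N) :
    selQ (j + 1) h = Fin.snoc (selQ j (Nat.le_of_succ_le h)) ⟨j, h⟩ := by
  funext a
  refine Fin.lastCases ?_ (fun a => ?_) a <;> simp [selQ]

theorem selQt_succ {N j : ℕ} (h : j + 1 < N) :
    selQt (j + 1) h = Fin.snoc (selQ j (by omega)) ⟨j + 1, h⟩ := by
  funext a
  refine Fin.lastCases ?_ (fun a => ?_) a
  · simp [selQt]
  · simp [selQt, selQ, a.isLt.ne]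

theorem selQ_injective {N j : ℕ} (h : j ≤ N) : Function.Injective (selQ j h) :=
  fun a b hab => Fin.ext (by simpa [selQ] using congrArg Fin.val hab)

theorem det_rsM0_ne_zero {N j : ℕ} {τ : Fin N → ℂ} (hτ : Function.Injective τ)
    {s : Fin j → Fin N} (hs : Function.Injective s) : (rsM0 τ s).det ≠ 0 :=
  det_vandermonde_ne_zero_iff.2 (hτ.comp hs)

theorem QQtilde_det_div {N : ℕ} (p : Fin N → ℂ) {τ : Fin N → ℂ} (hτ : Function.Injective τ)
    {η : ℂ} (hη : η ≠ 0) {m : ℕ} (s : Fin m → Fin N) (a b : Fin N)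
    (hs : Function.Injective (Fin.snoc (Fin.snoc s a) b : Fin (m + 2) → Fin N)) (u : ℂ) :
    τ b * ((rsM p τ η (η * u) (Fin.snoc s a)).det / (rsM0 τ (Fin.snoc s a)).det) *
        ((rsM p τ η (η⁻¹ * u) (Fin.snoc s b)).det / (rsM0 τ (Fin.snoc s b)).det) -
      τ a * ((rsM p τ η (η⁻¹ * u) (Fin.snoc s a)).det / (rsM0 τ (Fin.snoc s a)).det) *
        ((rsM p τ η (η * u) (Fin.snoc s b)).det / (rsM0 τ (Fin.snoc s b)).det) =
    (τ b - τ a) * ((rsM p τ η u s).det / (rsM0 τ s).det) *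
      ((rsM p τ η u (Fin.snoc (Fin.snoc s a) b)).det /
        (rsM0 τ (Fin.snoc (Fin.snoc s a) b)).det) := by
  have hsa : Function.Injective (Fin.snoc s a : Fin (m + 1) → Fin N) := by
    rw [← Fin.snoc_comp_castSucc (f := Fin.snoc s a) (a := b)]
    exact hs.comp (Fin.castSucc_injective _)
  have hsb : Function.Injective (Fin.snoc s b : Fin (m + 1) → Fin N) := by
    have : (Fin.snoc (Fin.snoc s a) b : Fin (m + 2) → Fin N) ∘ (Fin.last m).castSucc.succAbove =
        Fin.snoc s b := by
      rw [Fin.snoc_comp_castSucc_succAbove, Fin.succAbove_last, Fin.snoc_comp_castSucc]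
    rw [← this]
    exact hs.comp Fin.succAbove_right_injective
  have hs' : Function.Injective s := by
    rw [← Fin.snoc_comp_castSucc (f := s) (a := a)]
    exact hsa.comp (Fin.castSucc_injective _)
  have := det_rsM0_ne_zero hτ hs
  have := det_rsM0_ne_zero hτ hsa
  have := det_rsM0_ne_zero hτ hsb
  have := det_rsM0_ne_zero hτ hs'
  have hD := QQtilde_det_rsM p τ u hη s a b
  have hV := det_rsM0_snoc_snoc_mul_det_rsM0 τ s a b
  generalize (rsM p τ η (η⁻¹ * u) (Fin.snoc s a)).det = Da at hD ⊢
  generalize (rsM p τ η (η⁻¹ * u) (Fin.snoc s b)).det = Db at hD ⊢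
  field_simp
  linear_combination (rsM0 τ s).det * (rsM0 τ (Fin.snoc (Fin.snoc s a) b)).det * hD +
    (rsM p τ η u s).det * (rsM p τ η u (Fin.snoc (Fin.snoc s a) b)).det * hV

/-- The determinant formulas solve the QQ̃ functional equations of `T[U(N)]`:
each `Q_j` is a monic polynomial of degree `j`, and the QQ̃ relation
`τ_{j+1} Q_j(ηu) Q̃_j(η⁻¹u) − τ_j Q_j(η⁻¹u) Q̃_j(ηu) = (τ_{j+1} − τ_j) Q_{j-1}(u) Q_{j+1}(u)`
holds for `1 ≤ j ≤ N−1`. -/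
theorem QQtilde_determinant_solution (N : ℕ) (p τ : Fin N → ℂ)
    (hτ : Function.Injective τ) (η : ℂ) (hη : η ≠ 0) :
    (∀ (j : ℕ) (hj : j ≤ N), ∃ R : Polynomial ℂ, R.Monic ∧ R.natDegree = j ∧
        ∀ u : ℂ, Polynomial.eval u R = Qdet p τ η j hj u) ∧
    (∀ (j : ℕ) (hj1 : 1 ≤ j) (hjN : j + 1 ≤ N) (u : ℂ),
      τ ⟨j, by omega⟩ * Qdet p τ η j (by omega) (η * u) *
          Qtdet p τ η j (by omega) (η⁻¹ * u) -
        τ ⟨j - 1, by omega⟩ * Qdet p τ η j (by omega) (η⁻¹ * u) *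
          Qtdet p τ η j (by omega) (η * u) =
      (τ ⟨j, by omega⟩ - τ ⟨j - 1, by omega⟩) * Qdet p τ η (j - 1) (by omega) u *
        Qdet p τ η (j + 1) (by omega) u) := by
  refine ⟨fun j hj => exists_monic_eval_eq_det_rsM_div p τ hη (selQ j hj)
    (det_rsM0_ne_zero hτ (selQ_injective hj)), fun j hj1 hjN u => ?_⟩
  obtain ⟨m, rfl⟩ : ∃ m, j = m + 1 := ⟨j - 1, by omega⟩
  have hs := selQ_injective hjN
  simp only [Qdet, Qtdet, selQ_succ, selQt_succ] at hs ⊢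
  exact QQtilde_det_div p hτ hη _ _ _ hs u
end

section
/- Fix N ≥ 1, complex numbers p₁, …, p_N, pairwise distinct complex numbers τ₁, …, τ_N, and η ∈ ℂ with η ≠ 0. Let L be the trigonometric Ruijsenaars–Schneider Lax matrix, i.e. the N×N complex matrix with entries L_{ij} = (∏_{k≠j} (ητ_i − η⁻¹τ_k) / ∏_{k≠i} (τ_i − τ_k))·p_j. Then the characteristic polynomial of L is given by det(u·1_N − L) = Σ_{r=0}^{N} (−1)^r u^{N−r} · T_r, where T_r = Σ_{I ⊆ {1,…,N}, |I| = r} (∏_{i∈I, j∉I} (ητ_i − η⁻¹τ_j)/(τ_i − τ_j)) · ∏_{k∈I} p_k. -/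
/-!
The coefficient of `u ^ (N - r)` in `det (u - L)` is `(-1) ^ r` times the sum of the `r × r`
principal minors of `L`, so it suffices to show that the principal minor on `I` is the summand
of `T_r` indexed by `I`. Splitting each product over `k ≠ j` into the factors with `k ∉ I` and
those with `k ∈ I`, that minor is `diag(row scalars) · C · diag(p)` with
`C_ab = ∏_{c ∈ I, c ≠ b} (η τ_a - η⁻¹ τ_c)`, the matrix of the nodal polynomials
`q_b = ∏_{c ≠ b} (X - η⁻¹ τ_c)` evaluated at the points `η τ_a`. Evaluated at the nodes
`η⁻¹ τ_a` instead, the same polynomials give a diagonal matrix, and the two evaluation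
matrices differ by the ratio of the Vandermonde determinants of `η τ` and `η⁻¹ τ`. This gives
`det C = ∏_{b ≠ c} (τ_b - τ_c)`, which cancels the part of the denominators with `k ∈ I`.
-/

/-- The trigonometric Ruijsenaars–Schneider Lax matrix
`L_{ij} = (∏_{k≠j} (ητ_i − η⁻¹τ_k) / ∏_{k≠i} (τ_i − τ_k)) p_j`. -/
noncomputable def trsLax (N : ℕ) (p τ : Fin N → ℂ) (η : ℂ) :
    Matrix (Fin N) (Fin N) ℂ :=
  Matrix.of fun i j =>
    (∏ k ∈ Finset.univ.erase j, (η * τ i - η⁻¹ * τ k)) /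
        (∏ k ∈ Finset.univ.erase i, (τ i - τ k)) * p j

open Finset Matrix Polynomial

namespace Matrix

variable {R : Type*} [CommRing R]

theorem vandermonde_smul {n : ℕ} (c : R) (v : Fin n → R) :
    vandermonde (c • v) = vandermonde v * diagonal fun j : Fin n => c ^ (j : ℕ) := by
  ext i j
  simp [vandermonde_apply, mul_pow, mul_comm]

theorem det_vandermonde_smul {n : ℕ} (c : R) (v : Fin n → R) :
    det (vandermonde (c • v)) = c ^ n.choose 2 * det (vandermonde v) := by
  rw [vandermonde_smul, det_mul, det_diagonal, prod_pow_eq_pow_sum,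
    Fin.sum_univ_eq_sum_range (fun j => j), sum_range_id, ← Nat.choose_two_right, mul_comm]

theorem of_eval_eq_vandermonde_mul_of_coeff {n : ℕ} (v : Fin n → R) (p : Fin n → R[X])
    (hp : ∀ j, (p j).natDegree < n) :
    of (fun i j => (p j).eval (v i)) = vandermonde v * of fun (i j : Fin n) => (p j).coeff i := by
  ext i j
  rw [of_apply, mul_apply, eval_eq_sum_range' (hp j), ← Fin.sum_univ_eq_sum_range]
  simp [vandermonde_apply, mul_comm]

theorem det_of_eval_mul_det_vandermonde {n : ℕ} (v w : Fin n → R) (p : Fin n → R[X])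
    (hp : ∀ j, (p j).natDegree < n) :
    det (of fun i j => (p j).eval (v i)) * det (vandermonde w) =
      det (vandermonde v) * det (of fun i j => (p j).eval (w i)) := by
  rw [of_eval_eq_vandermonde_mul_of_coeff v p hp, of_eval_eq_vandermonde_mul_of_coeff w p hp,
    det_mul, det_mul]
  ring

theorem det_smul_one_sub_eq_sum_minors {n : Type*} [Fintype n] [DecidableEq n]
    (M : Matrix n n R) (u : R) :
    (u • (1 : Matrix n n R) - M).det =
      ∑ k ∈ range (Fintype.card n + 1), (-1) ^ k * u ^ (Fintype.card n - k) *
        ∑ s ∈ univ.powersetCard k, (M.submatrix (Subtype.val : s → n) Subtype.val).det := by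
  nontriviality R
  rw [smul_one_eq_diagonal, ← scalar_apply, ← eval_charpoly, eval_eq_sum_range,
    charpoly_natDegree_eq_dim, ← sum_range_reflect]
  refine sum_congr rfl fun k hk => ?_
  rw [add_tsub_cancel_right,
    charpoly_coeff_eq_sum_minors M k (by simpa [Nat.lt_succ_iff] using hk)]
  ring

end Matrix

theorem Nat.choose_two_right_add_self (n : ℕ) : n.choose 2 + n.choose 2 = n * (n - 1) := by
  rw [← two_mul, Nat.choose_two_right, Nat.mul_div_cancel' (Nat.even_mul_pred_self n).two_dvd]

namespace Finset

variable {ι M : Type*} [Fintype ι] [DecidableEq ι] [CommMonoid M]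

theorem prod_univ_erase_equiv {κ : Type*} [Fintype κ] [DecidableEq κ] (e : κ ≃ ι) (f : ι → M)
    (b : κ) : ∏ c ∈ univ.erase (e b), f c = ∏ c ∈ univ.erase b, f (e c) := by
  rw [← map_univ_equiv e, ← Equiv.coe_toEmbedding, ← map_erase, prod_map]

theorem prod_univ_erase_coe_eq_prod_compl_mul {s : Finset ι} (f : ι → M) (i : s) :
    ∏ k ∈ univ.erase (i : ι), f k = (∏ k ∈ sᶜ, f k) * ∏ c ∈ univ.erase i, f c := by
  rw [univ_eq_attach, prod_erase_attach, ← prod_union (disjoint_left.2 fun k hk hk' =>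
    mem_compl.1 hk (mem_of_mem_erase hk'))]
  congr 1
  ext k
  by_cases hk : k ∈ s
  · simp [hk]
  · have hki : k ≠ i := fun h => hk (h ▸ i.2)
    simp [hk, hki]

end Finset

section

variable {K : Type*} [Field K] {η : K}

theorem det_prod_erase_mul_sub_inv_mul_fin {r : ℕ} (hη : η ≠ 0) {z : Fin r → K}
    (hz : Function.Injective z) :
    det (of fun a b => ∏ c ∈ univ.erase b, (η * z a - η⁻¹ * z c)) =
      ∏ b, ∏ c ∈ univ.erase b, (z b - z c) := by
  set q : Fin r → K[X] := fun b => Lagrange.nodal (univ.erase b) (η⁻¹ • z)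
  have hq (b : Fin r) : (q b).natDegree < r := by
    simp [q, Lagrange.natDegree_nodal, b.pos]
  have hdiag : of (fun a b => (q b).eval ((η⁻¹ • z) a)) =
      diagonal fun b => η⁻¹ ^ (r - 1) * ∏ c ∈ univ.erase b, (z b - z c) := by
    ext a b
    rcases eq_or_ne a b with rfl | hab
    · simp [q, Lagrange.eval_nodal, ← mul_sub, prod_mul_distrib]
    · rw [of_apply, diagonal_apply_ne _ hab]
      exact Lagrange.eval_nodal_at_node (mem_erase.2 ⟨hab, mem_univ a⟩)
  have key := det_of_eval_mul_det_vandermonde (η • z) (η⁻¹ • z) q hq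
  rw [hdiag, det_diagonal, prod_mul_distrib, prod_const, card_univ, Fintype.card_fin, ← pow_mul,
    det_vandermonde_smul, det_vandermonde_smul, Nat.mul_comm, ← Nat.choose_two_right_add_self,
    pow_add] at key
  simp only [q, Lagrange.eval_nodal, Pi.smul_apply, smul_eq_mul] at key
  have hV : (vandermonde z).det ≠ 0 := det_vandermonde_ne_zero_iff.2 hz
  have hηm : η⁻¹ ^ r.choose 2 ≠ 0 := pow_ne_zero _ (inv_ne_zero hη)
  refine mul_right_cancel₀ (mul_ne_zero hηm hV) (key.trans ?_)
  have hηη : η ^ r.choose 2 * η⁻¹ ^ r.choose 2 = 1 := by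
    rw [← mul_pow, mul_inv_cancel₀ hη, one_pow]
  linear_combination
    (η⁻¹ ^ r.choose 2 * (vandermonde z).det * ∏ b, ∏ c ∈ univ.erase b, (z b - z c)) * hηη

theorem det_prod_erase_mul_sub_inv_mul {ι : Type*} [Fintype ι] [DecidableEq ι] (hη : η ≠ 0)
    {z : ι → K} (hz : Function.Injective z) :
    det (of fun a b => ∏ c ∈ univ.erase b, (η * z a - η⁻¹ * z c)) =
      ∏ b, ∏ c ∈ univ.erase b, (z b - z c) := by
  set e := (Fintype.equivFin ι).symm
  have hfin := det_prod_erase_mul_sub_inv_mul_fin hη (hz.comp e.injective)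
  rw [← det_submatrix_equiv_self e, ← e.prod_comp]
  convert hfin using 2
  · ext a b
    exact prod_univ_erase_equiv e _ b
  · exact prod_univ_erase_equiv e _ _

end

theorem det_submatrix_trsLax {N : ℕ} (p : Fin N → ℂ) {τ : Fin N → ℂ} (hτ : Function.Injective τ)
    {η : ℂ} (hη : η ≠ 0) (s : Finset (Fin N)) :
    ((trsLax N p τ η).submatrix (Subtype.val : s → Fin N) Subtype.val).det =
      (∏ i ∈ s, ∏ j ∈ sᶜ, (η * τ i - η⁻¹ * τ j) / (τ i - τ j)) * ∏ k ∈ s, p k := by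
  set A : Fin N → ℂ := fun i => ∏ j ∈ sᶜ, (η * τ i - η⁻¹ * τ j) / (τ i - τ j)
  set B : s → ℂ := fun i => ∏ c ∈ univ.erase i, (τ i - τ c)
  have hB (i : s) : B i ≠ 0 :=
    prod_ne_zero_iff.2 fun c hc => sub_ne_zero.2 <| hτ.ne <| Subtype.val_injective.ne
      (ne_of_mem_erase hc).symm
  have hsub : (trsLax N p τ η).submatrix (Subtype.val : s → Fin N) Subtype.val =
      diagonal (fun i : s => A i / B i) *
        of (fun i j : s => ∏ c ∈ univ.erase j, (η * τ i - η⁻¹ * τ c)) *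
          diagonal (fun j : s => p j) := by
    ext i j
    simp only [submatrix_apply, trsLax, of_apply, mul_diagonal, diagonal_mul, A, B,
      prod_univ_erase_coe_eq_prod_compl_mul _ i, prod_univ_erase_coe_eq_prod_compl_mul _ j,
      prod_div_distrib]
    ring
  rw [hsub, det_mul, det_mul, det_diagonal, det_diagonal,
    det_prod_erase_mul_sub_inv_mul (z := fun i : s => τ i) hη (hτ.comp Subtype.val_injective),
    ← prod_mul_distrib, prod_congr rfl fun (i : s) _ => div_mul_cancel₀ (A i) (hB i),
    prod_coe_sort, prod_coe_sort, mul_comm]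

theorem tRS_charpoly_hamiltonians_general (N : ℕ) (p τ : Fin N → ℂ)
    (hτ : Function.Injective τ) (η : ℂ) (hη : η ≠ 0) (u : ℂ) :
    (u • (1 : Matrix (Fin N) (Fin N) ℂ) - trsLax N p τ η).det =
      ∑ r ∈ Finset.range (N + 1), (-1 : ℂ) ^ r * u ^ (N - r) *
        ∑ I ∈ Finset.powersetCard r (Finset.univ : Finset (Fin N)),
          (∏ i ∈ I, ∏ j ∈ Iᶜ, (η * τ i - η⁻¹ * τ j) / (τ i - τ j)) * ∏ k ∈ I, p k := by
  rw [det_smul_one_sub_eq_sum_minors, Fintype.card_fin]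
  simp only [det_submatrix_trsLax p hτ hη]

/-- The characteristic polynomial of the trigonometric Ruijsenaars–Schneider Lax matrix
expands in the classical tRS Hamiltonians
`T_r = Σ_{|I|=r} (∏_{i∈I, j∉I} (ητ_i − η⁻¹τ_j)/(τ_i − τ_j)) ∏_{k∈I} p_k`. -/
theorem tRS_charpoly_hamiltonians (N : ℕ) (hN : 1 ≤ N) (p τ : Fin N → ℂ)
    (hτ : Function.Injective τ) (η : ℂ) (hη : η ≠ 0) (u : ℂ) :
    (u • (1 : Matrix (Fin N) (Fin N) ℂ) - trsLax N p τ η).det =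
      ∑ r ∈ Finset.range (N + 1), (-1 : ℂ) ^ r * u ^ (N - r) *
        ∑ I ∈ Finset.powersetCard r (Finset.univ : Finset (Fin N)),
          (∏ i ∈ I, ∏ j ∈ Iᶜ, (η * τ i - η⁻¹ * τ j) / (τ i - τ j)) * ∏ k ∈ I, p k :=
  tRS_charpoly_hamiltonians_general N p τ hτ η hη u
end

section
/- Let N ≥ 1, let κ, η ∈ ℂ∖{0}, let μ₁, …, μ_N be pairwise distinct complex numbers and ν₁, …, ν_{N−1} be pairwise distinct complex numbers such that κη⁻¹μ_i ≠ κ⁻¹ν_j for all i, j. For I ⊆ {1,…,N} define c_I(μ) := ∏_{i∈I, j∈{1,…,N}∖I} (κη⁻¹μ_i − ηκ⁻¹μ_j)/(μ_i − μ_j) and Π_I(μ,ν) := ∏_{i∈I} ∏_{j=1}^{N−1} (μ_i − η⁻¹ν_j)/(κη⁻¹μ_i − κ⁻¹ν_j); for I ⊆ {1,…,N−1} define c̄_I(ν) := ∏_{i∈I, j∈{1,…,N−1}∖I} (κη⁻¹ν_j − ηκ⁻¹ν_i)/(ν_j − ν_i) and Π̄_I(μ,ν) := ∏_{i∈I} ∏_{j=1}^{N}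 (μ_j − η⁻¹ν_i)/(κη⁻¹μ_j − κ⁻¹ν_i). Then for every 0 ≤ r ≤ N: Σ_{I ⊆ {1,…,N}, |I| = r} c_I(μ)·Π_I(μ,ν) = Σ_{I ⊆ {1,…,N−1}, |I| = r} c̄_I(ν)·Π̄_I(μ,ν) + Σ_{I ⊆ {1,…,N−1}, |I| = r−1} c̄_I(ν)·Π̄_I(μ,ν). -/
/-!
After the substitution `q = κ η⁻¹`, `A = {μ_i}`, `B = {η⁻¹ ν_j}` the two sides are
`T_r(q; A, B)` and `T_r(q⁻¹; B, A) + T_{r-1}(q⁻¹; B, A)` for one and the same normalised sum `T`.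

For disjoint `A`, `B` we prove this branching identity (`|A| = |B| + 1`) together with the square
identity `T_r(q; A, B) = T_r(q⁻¹; B, A)` (`|A| = |B|`) by induction on `|B|`. In the inductive step
one point `x` of `A` is treated as a variable. Multiplied by `∏_{a ≠ x} (x - a) ∏_b (q x - q⁻¹ b)`,
both sides become polynomials in `x` of degree at most `|A| - 1 + |B|`. They vanish at the other
points of `A`, because the poles of `T_r` cancel in pairs. At the points `b ∈ B` they agree by
induction, because there `b` drops out of `B`. Their leading coefficients agree by the other
identity at the same size. Finally, the disjointness assumption is removed by moving a common
point of `A` and `B` to a generic position: both sides are polynomial in that point.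
-/

noncomputable section

namespace Intertwiner

open Finset Polynomial

section Combinatorics

variable {α M : Type*} [DecidableEq α] [AddCommMonoid M]

theorem sum_powersetCard_succ_insert {x : α} {s : Finset α} (hx : x ∉ s) (r : ℕ)
    (f : Finset α → M) :
    ∑ I ∈ (insert x s).powersetCard (r + 1), f I =
      ∑ I ∈ s.powersetCard (r + 1), f I + ∑ J ∈ s.powersetCard r, f (insert x J) := by
  rw [powersetCard_succ_insert hx, sum_union, sum_image]
  · intro I hI J hJ h
    rw [← erase_insert fun h' => hx ((mem_powersetCard.1 hI).1 h'),
      ← erase_insert fun h' => hx ((mem_powersetCard.1 hJ).1 h'), h]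
  · refine disjoint_left.2 fun I hI hI' => ?_
    obtain ⟨J, -, rfl⟩ := mem_image.1 hI'
    exact hx ((mem_powersetCard.1 hI).1 (mem_insert_self x J))

theorem sum_powersetCard_insert_of_forall_eq_zero {x : α} {s : Finset α} (hx : x ∉ s) (r : ℕ)
    {f : Finset α → M} (hf : ∀ J, f (insert x J) = 0) :
    ∑ I ∈ (insert x s).powersetCard r, f I = ∑ I ∈ s.powersetCard r, f I := by
  cases r with
  | zero => simp
  | succ r => simp [sum_powersetCard_succ_insert hx, hf]

end Combinatorics

section LinearProd

variable {R ι : Type*} [CommRing R]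

def linearProd (s : Finset ι) (u : R) (v : ι → R) : R[X] :=
  ∏ i ∈ s, (C u * X - C (v i))

@[simp]
theorem eval_linearProd (s : Finset ι) (u : R) (v : ι → R) (x : R) :
    (linearProd s u v).eval x = ∏ i ∈ s, (u * x - v i) := by
  simp [linearProd, eval_prod]

theorem natDegree_C_mul_X_sub_C_le (u v : R) : (C u * X - C v).natDegree ≤ 1 := by
  rw [sub_eq_add_neg, ← C_neg]
  exact natDegree_linear_le

theorem natDegree_linearProd_le (s : Finset ι) (u : R) (v : ι → R) :
    (linearProd s u v).natDegree ≤ #s :=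
  (natDegree_prod_le _ _).trans <| by
    simpa using sum_le_sum fun i (_ : i ∈ s) => natDegree_C_mul_X_sub_C_le u (v i)

theorem coeff_linearProd_card (s : Finset ι) (u : R) (v : ι → R) :
    (linearProd s u v).coeff #s = u ^ #s := by
  simpa [linearProd] using coeff_prod_of_natDegree_le (s := s) (fun i => C u * X - C (v i)) 1
    fun i _ => natDegree_C_mul_X_sub_C_le u (v i)

theorem natDegree_linearProd_mul_le (s₁ s₂ s₃ : Finset ι) (u₁ u₂ u₃ : R) (v₁ v₂ v₃ : ι → R) :
    (linearProd s₁ u₁ v₁ * linearProd s₂ u₂ v₂ * linearProd s₃ u₃ v₃).natDegree ≤ #s₁ + #s₂ + #s₃ :=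
  natDegree_mul_le_of_le (natDegree_mul_le_of_le (natDegree_linearProd_le _ _ _)
    (natDegree_linearProd_le _ _ _)) (natDegree_linearProd_le _ _ _)

theorem coeff_linearProd_mul (s₁ s₂ s₃ : Finset ι) (u₁ u₂ u₃ : R) (v₁ v₂ v₃ : ι → R) :
    (linearProd s₁ u₁ v₁ * linearProd s₂ u₂ v₂ * linearProd s₃ u₃ v₃).coeff (#s₁ + #s₂ + #s₃) =
      u₁ ^ #s₁ * u₂ ^ #s₂ * u₃ ^ #s₃ := by
  rw [coeff_mul_add_eq_of_natDegree_le (natDegree_mul_le_of_le (natDegree_linearProd_le _ _ _)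
      (natDegree_linearProd_le _ _ _)) (natDegree_linearProd_le _ _ _),
    coeff_mul_add_eq_of_natDegree_le (natDegree_linearProd_le _ _ _)
      (natDegree_linearProd_le _ _ _),
    coeff_linearProd_card, coeff_linearProd_card, coeff_linearProd_card]

theorem eq_of_natDegree_le_of_coeff_eq_of_eval_eq [IsDomain R] {p p' : R[X]} (s : Finset R)
    (hp : p.natDegree ≤ #s) (hp' : p'.natDegree ≤ #s) (hc : p.coeff #s = p'.coeff #s)
    (he : ∀ x ∈ s, p.eval x = p'.eval x) : p = p' := by
  refine eq_of_degree_sub_lt_of_eval_finset_eq s ((degree_lt_iff_coeff_zero _ _).2 ?_) he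
  intro m hm
  rcases hm.eq_or_lt with rfl | hm
  · rw [coeff_sub, hc, sub_self]
  · rw [coeff_sub, coeff_eq_zero_of_natDegree_lt (hp.trans_lt hm),
      coeff_eq_zero_of_natDegree_lt (hp'.trans_lt hm), sub_self]

end LinearProd

variable {K : Type*} [Field K]

theorem prod_div_mul_prod_cancel {ι : Type*} {s : Finset ι} (f g : ι → K)
    (hg : ∀ i ∈ s, g i ≠ 0) : (∏ i ∈ s, f i / g i) * ∏ i ∈ s, g i = ∏ i ∈ s, f i := by
  rw [prod_div_distrib, div_mul_cancel₀ _ (prod_ne_zero_iff.2 hg)]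

def Separated (q : K) (A B : Finset K) : Prop :=
  ∀ a ∈ A, ∀ b ∈ B, q * a ≠ q⁻¹ * b

theorem Separated.symm {q : K} {A B : Finset K} (h : Separated q A B) : Separated q⁻¹ B A :=
  fun b hb a ha hab => h a ha b hb (by rw [hab, inv_inv])

theorem Separated.mono {q : K} {A A' B B' : Finset K} (h : Separated q A B) (hA : A' ⊆ A)
    (hB : B' ⊆ B) : Separated q A' B' :=
  fun a ha b hb => h a (hA ha) b (hB hb)

theorem inv_mul_inv_mul {η : K} (hη : η ≠ 0) (κ x : K) :
    (κ * η⁻¹)⁻¹ * (η⁻¹ * x) = κ⁻¹ * x := by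
  field_simp

def poleProd (q : K) (A B : Finset K) (x : K) : K :=
  (∏ a ∈ A, (x - a)) * ∏ b ∈ B, (q * x - q⁻¹ * b)

theorem poleProd_ne_zero {q x : K} {A B : Finset K} (hx : x ∉ A)
    (hxB : ∀ b ∈ B, q * x ≠ q⁻¹ * b) : poleProd q A B x ≠ 0 :=
  mul_ne_zero (prod_ne_zero_iff.2 fun _ ha => sub_ne_zero.2 fun h => hx (h ▸ ha))
    (prod_ne_zero_iff.2 fun b hb => sub_ne_zero.2 (hxB b hb))

theorem pow_card_sdiff {ι : Type*} [DecidableEq ι] {q : K} (hq : q ≠ 0) {s t : Finset ι}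
    (h : s ⊆ t) :
    q ^ #(t \ s) = q ^ #t * q⁻¹ ^ #s := by
  rw [← card_sdiff_add_card_eq_card h, pow_add, mul_assoc, ← mul_pow, mul_inv_cancel₀ hq,
    one_pow, mul_one]

variable [DecidableEq K]

def tHooftCoeff (q : K) (A I : Finset K) : K :=
  ∏ i ∈ I, ∏ j ∈ A \ I, (q * i - q⁻¹ * j) / (i - j)

def kernelRatio (q : K) (B I : Finset K) : K :=
  ∏ i ∈ I, ∏ b ∈ B, (i - b) / (q * i - q⁻¹ * b)

/-- For `q = κ η⁻¹`, `A = {μ_i}`, `B = {η⁻¹ ν_j}` this is the paper's `∑_{|I| = r} c_I Π_I`, and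
`tHooftSum q⁻¹ B A r` is its `∑_{|I| = r} c̄_I Π̄_I`. -/
def tHooftSum (q : K) (A B : Finset K) (r : ℕ) : K :=
  ∑ I ∈ A.powersetCard r, tHooftCoeff q A I * kernelRatio q B I

theorem tHooftSum_zero (q : K) (A B : Finset K) : tHooftSum q A B 0 = 1 := by
  simp [tHooftSum, tHooftCoeff, kernelRatio]

theorem tHooftCoeff_insert {q x : K} {A I : Finset K} (hx : x ∉ A) (hI : I ⊆ A) :
    tHooftCoeff q (insert x A) I =
      (∏ i ∈ I, (q⁻¹ * x - q * i) / (x - i)) * tHooftCoeff q A I := by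
  have hxI : x ∉ I := fun h => hx (hI h)
  rw [tHooftCoeff, tHooftCoeff, insert_sdiff_of_notMem _ hxI, ← prod_mul_distrib]
  refine prod_congr rfl fun i _ => ?_
  rw [prod_insert fun h => hx (mem_sdiff.1 h).1, ← neg_div_neg_eq, neg_sub, neg_sub]

theorem tHooftCoeff_insert_insert {q x : K} {A I : Finset K} (hx : x ∉ A) (hI : I ⊆ A) :
    tHooftCoeff q (insert x A) (insert x I) =
      (∏ j ∈ A \ I, (q * x - q⁻¹ * j) / (x - j)) * tHooftCoeff q A I := by
  rw [tHooftCoeff, tHooftCoeff, insert_sdiff_insert, sdiff_insert_of_notMem hx,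
    prod_insert fun h => hx (hI h)]

theorem kernelRatio_insert {q x : K} {B I : Finset K} (hx : x ∉ I) :
    kernelRatio q B (insert x I) =
      (∏ b ∈ B, (x - b) / (q * x - q⁻¹ * b)) * kernelRatio q B I := by
  rw [kernelRatio, kernelRatio, prod_insert hx]

theorem kernelRatio_insert_right {q x : K} {B : Finset K} (I : Finset K) (hx : x ∉ B) :
    kernelRatio q (insert x B) I =
      (∏ i ∈ I, (x - i) / (q⁻¹ * x - q * i)) * kernelRatio q B I := by
  rw [kernelRatio, kernelRatio, ← prod_mul_distrib]
  refine prod_congr rfl fun i _ => ?_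
  rw [prod_insert hx, ← neg_div_neg_eq, neg_sub, neg_sub]

/- Numerators of `x ↦ tHooftSum q (insert x A) B`, as polynomials in `x`: `outPoly` collects the
subsets `I ∌ x`, `inPoly` the subsets `insert x J`, and `dualPoly` is the same for the dual sum. -/
def outPoly (q : K) (A B : Finset K) (k : ℕ) : K[X] :=
  ∑ I ∈ A.powersetCard k, C (tHooftCoeff q A I * kernelRatio q B I) *
    (linearProd I q⁻¹ (q * ·) * linearProd (A \ I) 1 id * linearProd B q (q⁻¹ * ·))

def inPoly (q : K) (A B : Finset K) (k : ℕ) : K[X] :=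
  ∑ J ∈ A.powersetCard k, C (tHooftCoeff q A J * kernelRatio q B J) *
    (linearProd (A \ J) q (q⁻¹ * ·) * linearProd J 1 id * linearProd B 1 id)

def dualPoly (q : K) (A B : Finset K) (k : ℕ) : K[X] :=
  ∑ I ∈ B.powersetCard k, C (tHooftCoeff q⁻¹ B I * kernelRatio q⁻¹ A I) *
    (linearProd I 1 id * linearProd (B \ I) q (q⁻¹ * ·) * linearProd A 1 id)

theorem eval_outPoly_add_inPoly {q x : K} {A B : Finset K} (hx : x ∉ A)
    (hxB : ∀ b ∈ B, q * x ≠ q⁻¹ * b) (r : ℕ) :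
    (outPoly q A B (r + 1) + inPoly q A B r).eval x =
      tHooftSum q (insert x A) B (r + 1) * poleProd q A B x := by
  have hsub : ∀ a ∈ A, x - a ≠ 0 := fun a ha => sub_ne_zero.2 fun h => hx (h ▸ ha)
  rw [tHooftSum, sum_powersetCard_succ_insert hx, add_mul, sum_mul, sum_mul, outPoly, inPoly,
    eval_add, eval_finsetSum, eval_finsetSum]
  congr 1
  · refine sum_congr rfl fun I hI => ?_
    have hIA := (mem_powersetCard.1 hI).1
    rw [tHooftCoeff_insert hx hIA, poleProd, ← prod_sdiff hIA]
    simp only [eval_mul, eval_C, eval_linearProd, one_mul, id]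
    rw [← prod_div_mul_prod_cancel (q⁻¹ * x - q * ·) (x - ·) fun i hi => hsub i (hIA hi)]
    ring
  · refine sum_congr rfl fun J hJ => ?_
    have hJA := (mem_powersetCard.1 hJ).1
    rw [tHooftCoeff_insert_insert hx hJA, kernelRatio_insert fun h => hx (hJA h), poleProd,
      ← prod_sdiff hJA]
    simp only [eval_mul, eval_C, eval_linearProd, one_mul, id]
    rw [← prod_div_mul_prod_cancel (q * x - q⁻¹ * ·) (x - ·)
        fun j hj => hsub j (mem_sdiff.1 hj).1,
      ← prod_div_mul_prod_cancel (x - ·) (q * x - q⁻¹ * ·) fun b hb => sub_ne_zero.2 (hxB b hb)]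
    ring

theorem eval_dualPoly {q x : K} {A B : Finset K} (hx : x ∉ A)
    (hxB : ∀ b ∈ B, q * x ≠ q⁻¹ * b) (k : ℕ) :
    (dualPoly q A B k).eval x = tHooftSum q⁻¹ B (insert x A) k * poleProd q A B x := by
  rw [tHooftSum, sum_mul, dualPoly, eval_finsetSum]
  refine sum_congr rfl fun I hI => ?_
  have hIB := (mem_powersetCard.1 hI).1
  rw [kernelRatio_insert_right I hx, poleProd, ← prod_sdiff hIB]
  simp only [eval_mul, eval_C, eval_linearProd, one_mul, id, inv_inv]
  rw [← prod_div_mul_prod_cancel (x - ·) (q * x - q⁻¹ * ·)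
    fun i hi => sub_ne_zero.2 (hxB i (hIB hi))]
  ring

theorem eval_outPoly_insert_right {q β : K} {A B : Finset K} (hβ : β ∉ B)
    (hA : ∀ a ∈ A, q * a ≠ q⁻¹ * β) (k : ℕ) :
    (outPoly q A (insert β B) k).eval β = poleProd q A (insert β B) β * tHooftSum q A B k := by
  rw [outPoly, eval_finsetSum, tHooftSum, mul_sum]
  refine sum_congr rfl fun I hI => ?_
  have hIA := (mem_powersetCard.1 hI).1
  rw [kernelRatio_insert_right I hβ, poleProd, ← prod_sdiff hIA]
  simp only [eval_mul, eval_C, eval_linearProd, one_mul, id]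
  rw [← prod_div_mul_prod_cancel (β - ·) (q⁻¹ * β - q * ·)
    fun i hi => sub_ne_zero.2 (hA i (hIA hi)).symm]
  ring

theorem eval_inPoly_insert_right {q β : K} {A B : Finset K} (k : ℕ) :
    (inPoly q A (insert β B) k).eval β = 0 := by
  simp [inPoly, eval_finsetSum, prod_eq_zero (mem_insert_self β B) (sub_self β)]

theorem eval_dualPoly_insert_right {q β : K} {A B : Finset K} (hβ : β ∉ B) (k : ℕ) :
    (dualPoly q A (insert β B) k).eval β =
      poleProd q A (insert β B) β * tHooftSum q⁻¹ B A k := by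
  rw [dualPoly, eval_finsetSum, sum_powersetCard_insert_of_forall_eq_zero hβ k
      fun J => by simp [prod_eq_zero (mem_insert_self β J) (sub_self β)],
    tHooftSum, mul_sum]
  refine sum_congr rfl fun I hI => ?_
  have hIB := (mem_powersetCard.1 hI).1
  rw [tHooftCoeff_insert hβ hIB, poleProd, insert_sdiff_of_notMem _ fun h => hβ (hIB h)]
  simp only [eval_mul, eval_C, eval_linearProd, one_mul, id, inv_inv]
  rw [prod_insert fun h => hβ (mem_sdiff.1 h).1, prod_insert hβ, ← prod_sdiff hIB]
  rw [← prod_div_mul_prod_cancel (q * β - q⁻¹ * ·) (β - ·)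
    fun i hi => sub_ne_zero.2 fun h => hβ (h ▸ hIB hi)]
  ring

/- The poles at `α` of the terms indexed by `insert α J` and by `J` cancel. -/
theorem eval_outPoly_add_inPoly_insert_self {q α : K} {A B : Finset K} (hα : α ∉ A)
    (hαB : ∀ b ∈ B, q * α ≠ q⁻¹ * b) (r : ℕ) :
    (outPoly q (insert α A) B (r + 1) + inPoly q (insert α A) B r).eval α = 0 := by
  have hsub : ∀ a ∈ A, α - a ≠ 0 := fun a ha => sub_ne_zero.2 fun h => hα (h ▸ ha)
  have hout : ∀ I ∈ A.powersetCard (r + 1),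
      (C (tHooftCoeff q (insert α A) I * kernelRatio q B I) * (linearProd I q⁻¹ (q * ·) *
        linearProd (insert α A \ I) 1 id * linearProd B q (q⁻¹ * ·))).eval α = 0 := by
    intro I hI
    have hαI : α ∈ insert α A \ I :=
      mem_sdiff.2 ⟨mem_insert_self α A, fun h => hα ((mem_powersetCard.1 hI).1 h)⟩
    simp [prod_eq_zero hαI (sub_self α)]
  rw [outPoly, inPoly, eval_add, eval_finsetSum, eval_finsetSum,
    sum_powersetCard_succ_insert hα, sum_eq_zero hout, zero_add,
    sum_powersetCard_insert_of_forall_eq_zero hα r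
      fun J => by simp [prod_eq_zero (mem_insert_self α J) (sub_self α)],
    ← sum_add_distrib]
  refine sum_eq_zero fun J hJ => ?_
  have hJA := (mem_powersetCard.1 hJ).1
  have hαJ : α ∉ J := fun h => hα (hJA h)
  rw [tHooftCoeff_insert_insert hα hJA, tHooftCoeff_insert hα hJA, kernelRatio_insert hαJ,
    insert_sdiff_insert, sdiff_insert_of_notMem hα, insert_sdiff_of_notMem _ hαJ]
  simp only [eval_mul, eval_C, eval_linearProd, one_mul, id]
  rw [prod_insert hαJ, prod_insert fun h => hα (mem_sdiff.1 h).1,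
    ← prod_div_mul_prod_cancel (q * α - q⁻¹ * ·) (α - ·) fun j hj => hsub j (mem_sdiff.1 hj).1,
    ← prod_div_mul_prod_cancel (α - ·) (q * α - q⁻¹ * ·) fun b hb => sub_ne_zero.2 (hαB b hb),
    ← prod_div_mul_prod_cancel (q⁻¹ * α - q * ·) (α - ·) fun i hi => hsub i (hJA hi)]
  ring

theorem natDegree_outPoly_le (q : K) (A B : Finset K) (k : ℕ) :
    (outPoly q A B k).natDegree ≤ #A + #B := by
  refine natDegree_sum_le_of_forall_le _ _ fun I hI => (natDegree_C_mul_le _ _).trans ?_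
  rw [← card_sdiff_add_card_eq_card (mem_powersetCard.1 hI).1, add_comm #(A \ I)]
  exact natDegree_linearProd_mul_le _ _ _ _ _ _ _ _ _

theorem natDegree_inPoly_le (q : K) (A B : Finset K) (k : ℕ) :
    (inPoly q A B k).natDegree ≤ #A + #B := by
  refine natDegree_sum_le_of_forall_le _ _ fun I hI => (natDegree_C_mul_le _ _).trans ?_
  rw [← card_sdiff_add_card_eq_card (mem_powersetCard.1 hI).1]
  exact natDegree_linearProd_mul_le _ _ _ _ _ _ _ _ _

theorem natDegree_dualPoly_le (q : K) (A B : Finset K) (k : ℕ) :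
    (dualPoly q A B k).natDegree ≤ #A + #B := by
  refine natDegree_sum_le_of_forall_le _ _ fun I hI => (natDegree_C_mul_le _ _).trans ?_
  rw [← card_sdiff_add_card_eq_card (mem_powersetCard.1 hI).1, add_comm #A, add_comm #(B \ I)]
  exact natDegree_linearProd_mul_le _ _ _ _ _ _ _ _ _

theorem coeff_outPoly (q : K) (A B : Finset K) (k : ℕ) :
    (outPoly q A B k).coeff (#A + #B) = q⁻¹ ^ k * q ^ #B * tHooftSum q A B k := by
  rw [outPoly, finsetSum_coeff, tHooftSum, mul_sum]
  refine sum_congr rfl fun I hI => ?_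
  obtain ⟨hIA, hIk⟩ := mem_powersetCard.1 hI
  rw [← card_sdiff_add_card_eq_card hIA, add_comm #(A \ I), coeff_C_mul, coeff_linearProd_mul,
    one_pow, hIk]
  ring

theorem coeff_inPoly {q : K} (hq : q ≠ 0) (A B : Finset K) (k : ℕ) :
    (inPoly q A B k).coeff (#A + #B) = q ^ #A * q⁻¹ ^ k * tHooftSum q A B k := by
  rw [inPoly, finsetSum_coeff, tHooftSum, mul_sum]
  refine sum_congr rfl fun J hJ => ?_
  obtain ⟨hJA, hJk⟩ := mem_powersetCard.1 hJ
  have hdeg : #A + #B = #(A \ J) + #J + #B := by rw [card_sdiff_add_card_eq_card hJA]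
  rw [hdeg, coeff_C_mul, coeff_linearProd_mul, one_pow, one_pow, pow_card_sdiff hq hJA, hJk]
  ring

theorem coeff_dualPoly {q : K} (hq : q ≠ 0) (A B : Finset K) (k : ℕ) :
    (dualPoly q A B k).coeff (#A + #B) = q⁻¹ ^ k * q ^ #B * tHooftSum q⁻¹ B A k := by
  rw [dualPoly, finsetSum_coeff, tHooftSum, mul_sum]
  refine sum_congr rfl fun I hI => ?_
  obtain ⟨hIB, hIk⟩ := mem_powersetCard.1 hI
  have hdeg : #A + #B = #I + #(B \ I) + #A := by rw [← card_sdiff_add_card_eq_card hIB]; ring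
  rw [hdeg, coeff_C_mul, coeff_linearProd_mul, one_pow, one_pow, pow_card_sdiff hq hIB, hIk]
  ring

theorem eval_dualPoly_of_mem_left {q α : K} {A : Finset K} (B : Finset K) (hα : α ∈ A)
    (k : ℕ) : (dualPoly q A B k).eval α = 0 := by
  simp [dualPoly, eval_finsetSum, prod_eq_zero hα (sub_self α)]

def SquareIdentity (q : K) (A B : Finset K) : Prop :=
  ∀ r, tHooftSum q A B r = tHooftSum q⁻¹ B A r

def BranchingIdentity (q : K) (A B : Finset K) : Prop :=
  ∀ r, tHooftSum q A B (r + 1) = tHooftSum q⁻¹ B A (r + 1) + tHooftSum q⁻¹ B A r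

theorem branchingIdentity_insert_iff {q x : K} {A B : Finset K} (hx : x ∉ A)
    (hxB : ∀ b ∈ B, q * x ≠ q⁻¹ * b) :
    BranchingIdentity q (insert x A) B ↔ ∀ r,
      (outPoly q A B (r + 1) + inPoly q A B r).eval x =
        (dualPoly q A B (r + 1) + dualPoly q A B r).eval x := by
  refine forall_congr' fun r => ?_
  rw [eval_outPoly_add_inPoly hx hxB, eval_add, eval_dualPoly hx hxB, eval_dualPoly hx hxB,
    ← add_mul]
  exact (mul_left_inj' (poleProd_ne_zero hx hxB)).symm

theorem branchingIdentity_insert {q α : K} {A B : Finset K} (hq : q ≠ 0) (hα : α ∉ A)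
    (hAB : Disjoint A B) (hsep : Separated q (insert α A) B) (hcard : #A = #B)
    (hsq : SquareIdentity q A B) (hrec : ∀ β ∈ B, BranchingIdentity q A (B.erase β)) :
    BranchingIdentity q (insert α A) B := by
  refine (branchingIdentity_insert_iff hα (hsep α (mem_insert_self α A))).2 fun r =>
    congrArg (eval α) ?_
  refine eq_of_natDegree_le_of_coeff_eq_of_eval_eq (A ∪ B) ?_ ?_ ?_ fun x hx => ?_
  · rw [card_union_of_disjoint hAB]
    exact natDegree_add_le_of_degree_le (natDegree_outPoly_le _ _ _ _)
      (natDegree_inPoly_le _ _ _ _)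
  · rw [card_union_of_disjoint hAB]
    exact natDegree_add_le_of_degree_le (natDegree_dualPoly_le _ _ _ _)
      (natDegree_dualPoly_le _ _ _ _)
  · rw [card_union_of_disjoint hAB, coeff_add, coeff_add, coeff_outPoly, coeff_inPoly hq,
      coeff_dualPoly hq, coeff_dualPoly hq, hsq, hsq, hcard]
    ring
  · rcases mem_union.1 hx with hx | hx
    · have hdual : (dualPoly q A B (r + 1) + dualPoly q A B r).eval x = 0 := by
        rw [eval_add, eval_dualPoly_of_mem_left B hx, eval_dualPoly_of_mem_left B hx, add_zero]
      rw [hdual, ← insert_erase hx, eval_outPoly_add_inPoly_insert_self (notMem_erase x A)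
        (hsep x (mem_insert_of_mem hx))]
    · rw [← insert_erase hx, eval_add, eval_add, eval_outPoly_insert_right (notMem_erase x B)
          (fun a ha => hsep a (mem_insert_of_mem ha) x hx), eval_inPoly_insert_right,
        eval_dualPoly_insert_right (notMem_erase x B),
        eval_dualPoly_insert_right (notMem_erase x B), hrec x hx r]
      ring

theorem squareIdentity_insert {q α : K} {A B : Finset K} (hq : q ≠ 0) (hα : α ∉ A)
    (hAB : Disjoint A B) (hsep : Separated q (insert α A) B) (hcard : #A + 1 = #B)
    (hbr : BranchingIdentity q⁻¹ B A) (hrec : ∀ β ∈ B, SquareIdentity q A (B.erase β)) :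
    SquareIdentity q (insert α A) B := by
  have hαB := hsep α (mem_insert_self α A)
  rintro (_ | r)
  · rw [tHooftSum_zero, tHooftSum_zero]
  refine (mul_left_inj' (poleProd_ne_zero hα hαB)).1 ?_
  rw [← eval_outPoly_add_inPoly hα hαB, ← eval_dualPoly hα hαB]
  refine congrArg (eval α) ?_
  refine eq_of_natDegree_le_of_coeff_eq_of_eval_eq (A ∪ B) ?_ ?_ ?_ fun x hx => ?_
  · rw [card_union_of_disjoint hAB]
    exact natDegree_add_le_of_degree_le (natDegree_outPoly_le _ _ _ _)
      (natDegree_inPoly_le _ _ _ _)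
  · rw [card_union_of_disjoint hAB]
    exact natDegree_dualPoly_le _ _ _ _
  · rw [card_union_of_disjoint hAB, coeff_add, coeff_outPoly, coeff_inPoly hq,
      coeff_dualPoly hq, hbr, inv_inv, ← hcard]
    linear_combination (-(q ^ #A * q⁻¹ ^ r * tHooftSum q A B r)) * inv_mul_cancel₀ hq
  · rcases mem_union.1 hx with hx | hx
    · rw [eval_dualPoly_of_mem_left B hx, ← insert_erase hx,
        eval_outPoly_add_inPoly_insert_self (notMem_erase x A) (hsep x (mem_insert_of_mem hx))]
    · rw [← insert_erase hx, eval_add, eval_outPoly_insert_right (notMem_erase x B)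
          (fun a ha => hsep a (mem_insert_of_mem ha) x hx), eval_inPoly_insert_right,
        eval_dualPoly_insert_right (notMem_erase x B), hrec x hx (r + 1), add_zero]

theorem squareIdentity_empty (q : K) : SquareIdentity q ∅ ∅ := by
  rintro (_ | r)
  · rw [tHooftSum_zero, tHooftSum_zero]
  · rw [tHooftSum, tHooftSum, powersetCard_eq_empty.2 (by simp), sum_empty, sum_empty]

theorem squareIdentity_and_branchingIdentity_of_disjoint (m : ℕ) :
    (∀ (q : K) (A B : Finset K), q ≠ 0 → Disjoint A B → Separated q A B → #A = m → #B = m →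
      SquareIdentity q A B) ∧
    (∀ (q : K) (A B : Finset K), q ≠ 0 → Disjoint A B → Separated q A B → #A = m + 1 →
      #B = m → BranchingIdentity q A B) := by
  induction m with
  | zero =>
    refine ⟨fun q A B _ _ _ hA hB => ?_, fun q A B hq hAB hsep hA hB => ?_⟩
    · rw [card_eq_zero.1 hA, card_eq_zero.1 hB]
      exact squareIdentity_empty q
    · obtain ⟨α, A', hα, rfl, hA'⟩ := card_eq_succ.1 hA
      obtain rfl := card_eq_zero.1 hA'
      obtain rfl := card_eq_zero.1 hB
      exact branchingIdentity_insert hq hα (disjoint_empty_left ∅) hsep rfl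
        (squareIdentity_empty q) (by simp)
  | succ m ih =>
    have square : ∀ (q : K) (A B : Finset K), q ≠ 0 → Disjoint A B → Separated q A B →
        #A = m + 1 → #B = m + 1 → SquareIdentity q A B := by
      intro q A B hq hAB hsep hA hB
      obtain ⟨α, A', hα, rfl, hA'⟩ := card_eq_succ.1 hA
      have hAB' : Disjoint A' B := hAB.mono_left (subset_insert α A')
      refine squareIdentity_insert hq hα hAB' hsep (by omega) ?_ fun β hβ => ?_
      · exact ih.2 q⁻¹ B A' (inv_ne_zero hq) hAB'.symm
          (hsep.mono (subset_insert α A') le_rfl).symm hB hA'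
      · exact ih.1 q A' (B.erase β) hq (hAB'.mono_right (erase_subset β B))
          (hsep.mono (subset_insert α A') (erase_subset β B)) hA'
          (by rw [card_erase_of_mem hβ, hB, Nat.add_sub_cancel])
    refine ⟨square, fun q A B hq hAB hsep hA hB => ?_⟩
    obtain ⟨α, A', hα, rfl, hA'⟩ := card_eq_succ.1 hA
    have hAB' : Disjoint A' B := hAB.mono_left (subset_insert α A')
    refine branchingIdentity_insert hq hα hAB' hsep (by omega)
      (square q A' B hq hAB' (hsep.mono (subset_insert α A') le_rfl) hA' hB) fun β hβ => ?_
    exact ih.2 q A' (B.erase β) hq (hAB'.mono_right (erase_subset β B))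
      (hsep.mono (subset_insert α A') (erase_subset β B)) hA'
      (by rw [card_erase_of_mem hβ, hB, Nat.add_sub_cancel])

theorem branchingIdentity [Infinite K] {q : K} (hq : q ≠ 0) {A B : Finset K}
    (hsep : Separated q A B) (hcard : #A = #B + 1) : BranchingIdentity q A B := by
  induction hn : #(A ∩ B) using Nat.strong_induction_on generalizing A with
  | _ n ih =>
  obtain h | ⟨a, ha⟩ := (A ∩ B).eq_empty_or_nonempty
  · exact (squareIdentity_and_branchingIdentity_of_disjoint #B).2 q A B hq
      (disjoint_iff_inter_eq_empty.2 h) hsep hcard rfl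
  obtain ⟨haA, haB⟩ := mem_inter.1 ha
  have hsep' : ∀ y ∈ A.erase a, ∀ b ∈ B, q * y ≠ q⁻¹ * b :=
    fun y hy => hsep y (mem_of_mem_erase hy)
  rw [← insert_erase haA]
  refine (branchingIdentity_insert_iff (notMem_erase a A) (hsep a haA)).2 fun r =>
    congrArg (eval a) ?_
  let S : Finset K := A.erase a ∪ B ∪ B.image (q⁻¹ * q⁻¹ * ·)
  refine eq_of_infinite_eval_eq _ _ (S.finite_toSet.infinite_compl.mono fun x hx => ?_)
  simp only [S, Set.mem_compl_iff, mem_coe, mem_union, mem_image, not_or, not_exists,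
    not_and] at hx
  obtain ⟨⟨hxA, hxB⟩, hxq⟩ := hx
  have hxsep : ∀ b ∈ B, q * x ≠ q⁻¹ * b := fun b hb h =>
    hxq b hb (by rw [mul_assoc, ← h, inv_mul_cancel_left₀ hq])
  refine (branchingIdentity_insert_iff hxA hxsep).1 (ih _ ?_ ?_ ?_ rfl) r
  · rw [← hn, insert_inter_of_notMem hxB, erase_inter]
    exact card_erase_lt_of_mem ha
  · intro y hy
    rcases mem_insert.1 hy with rfl | hy
    exacts [hxsep, hsep' y hy]
  · rw [card_insert_of_notMem hxA, card_erase_add_one haA, hcard]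

section Dictionary

variable {ι ι' : Type*} [Fintype ι] [Fintype ι']

theorem tHooftSum_map [DecidableEq ι] (q : K) (a : ι ↪ K) (b : ι' ↪ K) (r : ℕ) :
    tHooftSum q (univ.map a) (univ.map b) r =
      ∑ I ∈ powersetCard r univ, (∏ i ∈ I, ∏ j ∈ Iᶜ, (q * a i - q⁻¹ * a j) / (a i - a j)) *
        ∏ i ∈ I, ∏ j, (a i - b j) / (q * a i - q⁻¹ * b j) := by
  rw [tHooftSum, powersetCard_map, sum_map]
  refine sum_congr rfl fun I _ => ?_
  simp only [tHooftCoeff, kernelRatio, RelEmbedding.coe_toEmbedding, mapEmbedding_apply,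
    ← Finset.map_sdiff, prod_map, compl_eq_univ_sdiff]

theorem sum_eq_tHooftSum [DecidableEq ι] {κ η : K} (hη : η ≠ 0) {μ : ι → K}
    (hμ : Function.Injective μ) {ν : ι' → K} (b : ι' ↪ K) (hb : ∀ j, b j = η⁻¹ * ν j) (r : ℕ) :
    ∑ I ∈ powersetCard r univ,
      (∏ i ∈ I, ∏ j ∈ Iᶜ, (κ * η⁻¹ * μ i - η * κ⁻¹ * μ j) / (μ i - μ j)) *
        ∏ i ∈ I, ∏ j, (μ i - η⁻¹ * ν j) / (κ * η⁻¹ * μ i - κ⁻¹ * ν j) =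
      tHooftSum (κ * η⁻¹) (univ.map ⟨μ, hμ⟩) (univ.map b) r := by
  rw [tHooftSum_map]
  refine sum_congr rfl fun I _ => ?_
  congr 1 <;> refine prod_congr rfl fun i _ => prod_congr rfl fun j _ => ?_
  · rw [Function.Embedding.coeFn_mk, mul_inv, inv_inv, mul_comm κ⁻¹]
  · rw [hb, inv_mul_inv_mul hη, Function.Embedding.coeFn_mk]

theorem sum_eq_tHooftSum_inv [DecidableEq ι'] {κ η : K} (hη : η ≠ 0) {μ : ι → K}
    (hμ : Function.Injective μ) {ν : ι' → K} (b : ι' ↪ K) (hb : ∀ j, b j = η⁻¹ * ν j) (r : ℕ) :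
    ∑ I ∈ powersetCard r univ,
      (∏ i ∈ I, ∏ j ∈ Iᶜ, (κ * η⁻¹ * ν j - η * κ⁻¹ * ν i) / (ν j - ν i)) *
        ∏ i ∈ I, ∏ j, (μ j - η⁻¹ * ν i) / (κ * η⁻¹ * μ j - κ⁻¹ * ν i) =
      tHooftSum (κ * η⁻¹)⁻¹ (univ.map b) (univ.map ⟨μ, hμ⟩) r := by
  rw [tHooftSum_map]
  refine sum_congr rfl fun I _ => ?_
  congr 1 <;> refine prod_congr rfl fun i _ => prod_congr rfl fun j _ => ?_
  · rw [hb, hb, inv_mul_inv_mul hη, inv_inv,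
      ← mul_div_mul_left _ _ (neg_ne_zero.2 (inv_ne_zero hη))]
    congr 1
    · field_simp
      ring
    · ring
  · rw [hb, inv_mul_inv_mul hη, Function.Embedding.coeFn_mk, inv_inv, ← neg_div_neg_eq,
      neg_sub, neg_sub]

end Dictionary

end Intertwiner

end

theorem bifundamental_intertwiner_UN_UNm1_general (N : ℕ) (hN : 1 ≤ N) (κ η : ℂ)
    (hκ : κ ≠ 0) (hη : η ≠ 0) (μ : Fin N → ℂ) (ν : Fin (N - 1) → ℂ)
    (hμ : Function.Injective μ) (hν : Function.Injective ν)
    (hgen : ∀ (i : Fin N) (j : Fin (N - 1)), κ * η⁻¹ * μ i ≠ κ⁻¹ * ν j)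
    (r : ℕ) :
    ∑ I ∈ Finset.powersetCard r (Finset.univ : Finset (Fin N)),
      (∏ i ∈ I, ∏ j ∈ Iᶜ, (κ * η⁻¹ * μ i - η * κ⁻¹ * μ j) / (μ i - μ j)) *
        ∏ i ∈ I, ∏ j : Fin (N - 1), (μ i - η⁻¹ * ν j) / (κ * η⁻¹ * μ i - κ⁻¹ * ν j) =
    (∑ I ∈ Finset.powersetCard r (Finset.univ : Finset (Fin (N - 1))),
      (∏ i ∈ I, ∏ j ∈ Iᶜ, (κ * η⁻¹ * ν j - η * κ⁻¹ * ν i) / (ν j - ν i)) *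
        ∏ i ∈ I, ∏ j : Fin N, (μ j - η⁻¹ * ν i) / (κ * η⁻¹ * μ j - κ⁻¹ * ν i)) +
    ∑ I ∈ Finset.filter (fun I => I.card + 1 = r)
        (Finset.powerset (Finset.univ : Finset (Fin (N - 1)))),
      (∏ i ∈ I, ∏ j ∈ Iᶜ, (κ * η⁻¹ * ν j - η * κ⁻¹ * ν i) / (ν j - ν i)) *
        ∏ i ∈ I, ∏ j : Fin N, (μ j - η⁻¹ * ν i) / (κ * η⁻¹ * μ j - κ⁻¹ * ν i) := by
  classical
  let b : Fin (N - 1) ↪ ℂ := ⟨(η⁻¹ * ν ·), (mul_right_injective₀ (inv_ne_zero hη)).comp hν⟩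
  have hsep :
      Intertwiner.Separated (κ * η⁻¹) (Finset.univ.map ⟨μ, hμ⟩) (Finset.univ.map b) := by
    simp only [Intertwiner.Separated, Finset.mem_map, Finset.mem_univ, true_and]
    rintro _ ⟨i, rfl⟩ _ ⟨j, rfl⟩
    simpa only [b, Function.Embedding.coeFn_mk, Intertwiner.inv_mul_inv_mul hη] using hgen i j
  have hcard : (Finset.univ.map ⟨μ, hμ⟩).card = (Finset.univ.map b).card + 1 := by
    simp only [Finset.card_map, Finset.card_univ, Fintype.card_fin]
    omega
  cases r with
  | zero => simp
  | succ r =>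
    have hfilter : Finset.filter (fun I => I.card + 1 = r + 1) (Finset.univ.powerset) =
        Finset.powersetCard r (Finset.univ : Finset (Fin (N - 1))) := by
      ext I
      simp [Finset.mem_powersetCard]
    rw [hfilter, Intertwiner.sum_eq_tHooftSum hη hμ b (fun _ => rfl),
      Intertwiner.sum_eq_tHooftSum_inv hη hμ b (fun _ => rfl),
      Intertwiner.sum_eq_tHooftSum_inv hη hμ b (fun _ => rfl)]
    exact Intertwiner.branchingIdentity (mul_ne_zero hκ (inv_ne_zero hη)) hsep hcard r

/-- The `U(N)×U(N−1)` bifundamental intertwining identity: for every `0 ≤ r ≤ N`,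
`Σ_{|I|=r} c_I(μ) Π_I(μ,ν) = Σ_{|I|=r} c̄_I(ν) Π̄_I(μ,ν) + Σ_{|I|=r−1} c̄_I(ν) Π̄_I(μ,ν)`. -/
theorem bifundamental_intertwiner_UN_UNm1 (N : ℕ) (hN : 1 ≤ N) (κ η : ℂ)
    (hκ : κ ≠ 0) (hη : η ≠ 0) (μ : Fin N → ℂ) (ν : Fin (N - 1) → ℂ)
    (hμ : Function.Injective μ) (hν : Function.Injective ν)
    (hgen : ∀ (i : Fin N) (j : Fin (N - 1)), κ * η⁻¹ * μ i ≠ κ⁻¹ * ν j)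
    (r : ℕ) (hr : r ≤ N) :
    ∑ I ∈ Finset.powersetCard r (Finset.univ : Finset (Fin N)),
      (∏ i ∈ I, ∏ j ∈ Iᶜ, (κ * η⁻¹ * μ i - η * κ⁻¹ * μ j) / (μ i - μ j)) *
        ∏ i ∈ I, ∏ j : Fin (N - 1), (μ i - η⁻¹ * ν j) / (κ * η⁻¹ * μ i - κ⁻¹ * ν j) =
    (∑ I ∈ Finset.powersetCard r (Finset.univ : Finset (Fin (N - 1))),
      (∏ i ∈ I, ∏ j ∈ Iᶜ, (κ * η⁻¹ * ν j - η * κ⁻¹ * ν i) / (ν j - ν i)) *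
        ∏ i ∈ I, ∏ j : Fin N, (μ j - η⁻¹ * ν i) / (κ * η⁻¹ * μ j - κ⁻¹ * ν i)) +
    ∑ I ∈ Finset.filter (fun I => I.card + 1 = r)
        (Finset.powerset (Finset.univ : Finset (Fin (N - 1)))),
      (∏ i ∈ I, ∏ j ∈ Iᶜ, (κ * η⁻¹ * ν j - η * κ⁻¹ * ν i) / (ν j - ν i)) *
        ∏ i ∈ I, ∏ j : Fin N, (μ j - η⁻¹ * ν i) / (κ * η⁻¹ * μ j - κ⁻¹ * ν i) :=
  bifundamental_intertwiner_UN_UNm1_general N hN κ η hκ hη μ ν hμ hν hgen r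
end

section
/- Let q, η, μ₁, μ₂ ∈ ℂ∖{0} with q^k ≠ 1 and μ₂ ≠ q^k μ₁ for all integers k ≥ 1, and let (x;q)_k := ∏_{i=0}^{k−1}(1 − x q^i) denote the q-Pochhammer symbol. Define the formal power series F(z) = Σ_{k≥0} [ (η²;q)_k (η² μ₁/μ₂;q)_k / ( (q μ₁/μ₂;q)_k (q;q)_k ) ] (q η⁻² z)^k, the q-hypergeometric series ₂F₁(η², η²μ₁/μ₂; qμ₁/μ₂; q; qη⁻²z). Then, as an identity of formal power series in z: μ₁·(1 − η²z)·F(qz) + μ₂·(1 − η⁻²z)·F(z/q) = (μ₁ + μ₂)·(1 − z)·F(z). Equivalently, the vortex partition function of T[U(2)] satisfies μ₁η·((ητ₁ − η⁻¹τ₂)/(τ₁ − τ₂))·F(qz) + μ₂η⁻¹·((ητ₂ − η⁻¹τ₁)/(τ₂ − τ₁))·F(z/q) = (μ₁ + μ₂)·F(z) with z = τ₁/τ₂. -/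
/-!
Write `F = ∑ aₖ zᵏ`. Comparing coefficients of `z^(n+1)`, the difference equation says
`a_{n+1} (μ₁ (q^(n+1) - 1) + μ₂ (q^-(n+1) - 1)) = aₙ (μ₁ (η² qⁿ - 1) + μ₂ (η⁻² q⁻ⁿ - 1))`.
Both brackets factor, after pulling out `μ₂ q^-(n+1)`, into exactly the factors of the term ratio
`a_{n+1} / aₙ = (1 - η² qⁿ)(1 - η² μ₁/μ₂ qⁿ) q η⁻² / ((1 - q μ₁/μ₂ qⁿ)(1 - q^(n+1)))`
of the basic hypergeometric series.
-/

/-- The q-Pochhammer symbol `(x;q)_k = ∏_{i=0}^{k-1} (1 − x qⁱ)`. -/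
noncomputable def qPoch (x q : ℂ) (k : ℕ) : ℂ :=
  ∏ i ∈ Finset.range k, (1 - x * q ^ i)

/-- The vortex partition function of `T[U(2)]`: the q-hypergeometric series
`₂F₁(η², η²μ₁/μ₂; qμ₁/μ₂; q; qη⁻²z)` as a formal power series in `z`. -/
noncomputable def tu2Vortex (q η μ₁ μ₂ : ℂ) : PowerSeries ℂ :=
  PowerSeries.mk fun k =>
    qPoch (η ^ 2) q k * qPoch (η ^ 2 * μ₁ / μ₂) q k /
      (qPoch (q * μ₁ / μ₂) q k * qPoch q q k) * (q * (η ^ 2)⁻¹) ^ k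

lemma qPoch_succ (x q : ℂ) (k : ℕ) :
    qPoch x q (k + 1) = qPoch x q k * (1 - x * q ^ k) :=
  Finset.prod_range_succ _ k

lemma qPoch_ne_zero {x q : ℂ} {k : ℕ} (h : ∀ i < k, x * q ^ i ≠ 1) : qPoch x q k ≠ 0 :=
  Finset.prod_ne_zero_iff.2 fun i hi => sub_ne_zero.2 (h i (Finset.mem_range.1 hi)).symm

noncomputable def qHypergeometricTerm (a b c q w : ℂ) (k : ℕ) : ℂ :=
  qPoch a q k * qPoch b q k / (qPoch c q k * qPoch q q k) * w ^ k

lemma coeff_tu2Vortex (q η μ₁ μ₂ : ℂ) (k : ℕ) :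
    PowerSeries.coeff k (tu2Vortex q η μ₁ μ₂) =
      qHypergeometricTerm (η ^ 2) (η ^ 2 * μ₁ / μ₂) (q * μ₁ / μ₂) q (q * (η ^ 2)⁻¹) k :=
  PowerSeries.coeff_mk _ _

lemma qHypergeometricTerm_succ_mul (a b c q w : ℂ) (k : ℕ) (hc : qPoch c q (k + 1) ≠ 0)
    (hq : qPoch q q (k + 1) ≠ 0) :
    qHypergeometricTerm a b c q w (k + 1) * ((1 - c * q ^ k) * (1 - q * q ^ k)) =
      qHypergeometricTerm a b c q w k * ((1 - a * q ^ k) * (1 - b * q ^ k) * w) := by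
  simp only [qHypergeometricTerm, qPoch_succ] at hc hq ⊢
  generalize 1 - c * q ^ k = dc at *
  generalize 1 - q * q ^ k = dq at *
  obtain ⟨hc₀, hc₁⟩ := mul_ne_zero_iff.1 hc
  obtain ⟨hq₀, hq₁⟩ := mul_ne_zero_iff.1 hq
  field_simp
  ring

lemma tRS_coeff_eq_of_recurrence {q η μ₁ μ₂ A B : ℂ} (n : ℕ) (hq : q ≠ 0) (hη : η ≠ 0)
    (hμ₂ : μ₂ ≠ 0)
    (h : A * ((1 - q * μ₁ / μ₂ * q ^ n) * (1 - q * q ^ n)) =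
      B * ((1 - η ^ 2 * q ^ n) * (1 - η ^ 2 * μ₁ / μ₂ * q ^ n) * (q * (η ^ 2)⁻¹))) :
    μ₁ * (q ^ (n + 1) * A - η ^ 2 * (q ^ n * B)) +
        μ₂ * (q⁻¹ ^ (n + 1) * A - (η ^ 2)⁻¹ * (q⁻¹ ^ n * B)) =
      (μ₁ + μ₂) * (A - B) := by
  rw [inv_pow, inv_pow]
  field_simp at h ⊢
  linear_combination q ^ n * h

theorem tu2_vortex_tRS_difference_equation_general (q η μ₁ μ₂ : ℂ) (hq0 : q ≠ 0)
    (hη : η ≠ 0) (hμ₂ : μ₂ ≠ 0)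
    (hq1 : ∀ k : ℕ, 1 ≤ k → q ^ k ≠ 1)
    (hμ : ∀ k : ℕ, 1 ≤ k → μ₂ ≠ q ^ k * μ₁) :
    PowerSeries.C μ₁ * ((1 - PowerSeries.C (η ^ 2) * PowerSeries.X) *
        PowerSeries.rescale q (tu2Vortex q η μ₁ μ₂)) +
      PowerSeries.C μ₂ * ((1 - PowerSeries.C (η ^ 2)⁻¹ * PowerSeries.X) *
        PowerSeries.rescale q⁻¹ (tu2Vortex q η μ₁ μ₂)) =
      PowerSeries.C (μ₁ + μ₂) * ((1 - PowerSeries.X) * tu2Vortex q η μ₁ μ₂) := by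
  have hc : ∀ k, qPoch (q * μ₁ / μ₂) q k ≠ 0 := fun k => qPoch_ne_zero fun i _ h => by
    refine hμ (i + 1) i.succ_pos ?_
    field_simp at h
    rw [← h]
    ring
  have hq : ∀ k, qPoch q q k ≠ 0 := fun k => qPoch_ne_zero fun i _ h =>
    hq1 (i + 1) i.succ_pos (by rwa [pow_succ, mul_comm])
  ext (_ | n)
  · simp [tu2Vortex, qPoch, PowerSeries.rescale_mk]
  · simp only [map_add (PowerSeries.coeff (n + 1)), map_sub, PowerSeries.coeff_C_mul, sub_mul,
      one_mul, mul_assoc, PowerSeries.coeff_succ_X_mul, PowerSeries.coeff_rescale, coeff_tu2Vortex]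
    exact tRS_coeff_eq_of_recurrence n hq0 hη hμ₂
      (qHypergeometricTerm_succ_mul _ _ _ _ _ n (hc _) (hq _))

/-- The `T[U(2)]` vortex partition function satisfies the rank-1 quantized
trigonometric Ruijsenaars–Schneider difference equation
`μ₁ (1 − η²z) F(qz) + μ₂ (1 − η⁻²z) F(z/q) = (μ₁ + μ₂)(1 − z) F(z)`
as an identity of formal power series in `z`. -/
theorem tu2_vortex_tRS_difference_equation (q η μ₁ μ₂ : ℂ) (hq0 : q ≠ 0)
    (hη : η ≠ 0) (hμ₁ : μ₁ ≠ 0) (hμ₂ : μ₂ ≠ 0)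
    (hq1 : ∀ k : ℕ, 1 ≤ k → q ^ k ≠ 1)
    (hμ : ∀ k : ℕ, 1 ≤ k → μ₂ ≠ q ^ k * μ₁) :
    PowerSeries.C μ₁ * ((1 - PowerSeries.C (η ^ 2) * PowerSeries.X) *
        PowerSeries.rescale q (tu2Vortex q η μ₁ μ₂)) +
      PowerSeries.C μ₂ * ((1 - PowerSeries.C (η ^ 2)⁻¹ * PowerSeries.X) *
        PowerSeries.rescale q⁻¹ (tu2Vortex q η μ₁ μ₂)) =
      PowerSeries.C (μ₁ + μ₂) * ((1 - PowerSeries.X) * tu2Vortex q η μ₁ μ₂) :=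
  tu2_vortex_tRS_difference_equation_general q η μ₁ μ₂ hq0 hη hμ₂ hq1 hμ
end

section
/- Let q, μ₁, μ₂ ∈ ℂ∖{0} with q^n ≠ 1 and μ₁ ≠ q^n μ₂ for all integers n ≥ 1. Define the formal power series F(z) = Σ_{n≥0} q^{n(n+1)/2}·z^n / ∏_{j=1}^{n} [ (1 − q^j)(μ₁ − q^j μ₂) ]. Then, as an identity of formal power series in z: μ₁·F(z/q) + μ₂·F(qz) − z·F(z) = (μ₁ + μ₂)·F(z). -/
/-!
Comparing coefficients of `z^(n+1)`, the difference equation says exactly that the coefficients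
`c n` of `F` satisfy `(μ₁ (q⁻ⁿ⁻¹ - 1) + μ₂ (qⁿ⁺¹ - 1)) c (n+1) = c n`. The bracket factors as
`q⁻ⁿ⁻¹ (1 - qⁿ⁺¹) (μ₁ - qⁿ⁺¹ μ₂)`, while passing from `c n` to `c (n+1)` multiplies by
`qⁿ⁺¹ / ((1 - qⁿ⁺¹) (μ₁ - qⁿ⁺¹ μ₂))`, so the two factors cancel.
-/

noncomputable def todaVortex (q μ₁ μ₂ : ℂ) : PowerSeries ℂ :=
  PowerSeries.mk fun n =>
    q ^ (n * (n + 1) / 2) /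
      ∏ j ∈ Finset.range n, ((1 - q ^ (j + 1)) * (μ₁ - q ^ (j + 1) * μ₂))

open PowerSeries

theorem PowerSeries.C_mul_rescale_add_C_mul_rescale_sub_X_mul_eq {R : Type*} [CommRing R]
    (a b p q : R) (f : R⟦X⟧)
    (hf : ∀ n, (a * (p ^ (n + 1) - 1) + b * (q ^ (n + 1) - 1)) * coeff (n + 1) f = coeff n f) :
    C a * rescale p f + C b * rescale q f - X * f = C (a + b) * f := by
  ext (_ | n)
  · simp only [map_sub, map_add, add_mul, coeff_C_mul, coeff_rescale, coeff_zero_X_mul]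
    ring
  · simp only [map_sub, map_add, add_mul, coeff_C_mul, coeff_rescale, coeff_succ_X_mul, ← hf n]
    ring

theorem Nat.mul_succ_div_two_succ (n : ℕ) :
    (n + 1) * (n + 1 + 1) / 2 = n * (n + 1) / 2 + (n + 1) := by
  simpa [mul_comm] using Nat.triangle_succ (n + 1)

theorem coeff_succ_todaVortex (q μ₁ μ₂ : ℂ) (n : ℕ) :
    coeff (n + 1) (todaVortex q μ₁ μ₂) =
      coeff n (todaVortex q μ₁ μ₂) *
        (q ^ (n + 1) / ((1 - q ^ (n + 1)) * (μ₁ - q ^ (n + 1) * μ₂))) := by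
  simp only [todaVortex, coeff_mk, Finset.prod_range_succ, Nat.mul_succ_div_two_succ, pow_add,
    mul_div_mul_comm]

theorem mul_inv_pow_sub_one_add_mul_pow_sub_one {K : Type*} [Field K] {q : K} (hq : q ≠ 0) (μ₁ μ₂ : K) (k : ℕ) :
    μ₁ * (q⁻¹ ^ k - 1) + μ₂ * (q ^ k - 1) = (q ^ k)⁻¹ * ((1 - q ^ k) * (μ₁ - q ^ k * μ₂)) := by
  have hk : q⁻¹ ^ k * q ^ k = 1 := by rw [inv_pow, inv_mul_cancel₀ (pow_ne_zero k hq)]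
  linear_combination (μ₁ + μ₂ - q ^ k * μ₂) * hk

theorem toda_vortex_difference_equation_general (q μ₁ μ₂ : ℂ) (hq0 : q ≠ 0)
    (hq1 : ∀ n : ℕ, 1 ≤ n → q ^ n ≠ 1)
    (hμ : ∀ n : ℕ, 1 ≤ n → μ₁ ≠ q ^ n * μ₂) :
    PowerSeries.C μ₁ * PowerSeries.rescale q⁻¹ (todaVortex q μ₁ μ₂) +
        PowerSeries.C μ₂ * PowerSeries.rescale q (todaVortex q μ₁ μ₂) -
        PowerSeries.X * todaVortex q μ₁ μ₂ =
      PowerSeries.C (μ₁ + μ₂) * todaVortex q μ₁ μ₂ := by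
  refine C_mul_rescale_add_C_mul_rescale_sub_X_mul_eq _ _ _ _ _ fun n => ?_
  set d := (1 - q ^ (n + 1)) * (μ₁ - q ^ (n + 1) * μ₂)
  have hd : d ≠ 0 :=
    mul_ne_zero (sub_ne_zero.2 (hq1 (n + 1) n.succ_pos).symm)
      (sub_ne_zero.2 (hμ (n + 1) n.succ_pos))
  calc (μ₁ * (q⁻¹ ^ (n + 1) - 1) + μ₂ * (q ^ (n + 1) - 1)) * coeff (n + 1) (todaVortex q μ₁ μ₂)
      = (q ^ (n + 1))⁻¹ * d * (coeff n (todaVortex q μ₁ μ₂) * (q ^ (n + 1) / d)) := by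
        rw [mul_inv_pow_sub_one_add_mul_pow_sub_one hq0, coeff_succ_todaVortex]
    _ = coeff n (todaVortex q μ₁ μ₂) * ((q ^ (n + 1))⁻¹ * q ^ (n + 1)) * (d / d) := by ring
    _ = coeff n (todaVortex q μ₁ μ₂) := by
        rw [inv_mul_cancel₀ (pow_ne_zero _ hq0), div_self hd, mul_one, mul_one]

/-- The `ℙ¹` vortex series satisfies the two-body open relativistic (q-)Toda
difference equation `μ₁ F(z/q) + μ₂ F(qz) − z F(z) = (μ₁ + μ₂) F(z)`
as an identity of formal power series in `z`. -/
theorem toda_vortex_difference_equation (q μ₁ μ₂ : ℂ) (hq0 : q ≠ 0)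
    (hμ₁ : μ₁ ≠ 0) (hμ₂ : μ₂ ≠ 0)
    (hq1 : ∀ n : ℕ, 1 ≤ n → q ^ n ≠ 1)
    (hμ : ∀ n : ℕ, 1 ≤ n → μ₁ ≠ q ^ n * μ₂) :
    PowerSeries.C μ₁ * PowerSeries.rescale q⁻¹ (todaVortex q μ₁ μ₂) +
        PowerSeries.C μ₂ * PowerSeries.rescale q (todaVortex q μ₁ μ₂) -
        PowerSeries.X * todaVortex q μ₁ μ₂ =
      PowerSeries.C (μ₁ + μ₂) * todaVortex q μ₁ μ₂ :=
  toda_vortex_difference_equation_general q μ₁ μ₂ hq0 hq1 hμ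
end

section
/- Let q, μ₁, μ₂, τ₁, τ₂ ∈ ℂ∖{0} with |q| < 1 and μ₁ ≠ q^n μ₂ for all integers n ≥ 1. Let θ(a,q) := ∏_{m=0}^∞ (1 − a q^m)(1 − q^{m+1} a⁻¹), which converges for |q| < 1 and a ≠ 0, and assume θ(μ₁τ₁,q) ≠ 0 and θ(μ₂τ₂,q) ≠ 0. Let F(z) = Σ_{n≥0} q^{n(n+1)/2}·z^n / ∏_{j=1}^{n} [ (1 − q^j)(μ₁ − q^j μ₂) ] (an entire function of z since |q| < 1), and define G(τ₁, τ₂) := [ θ(τ₁,q)·θ(μ₁,q)·θ(τ₂,q)·θ(μ₂,q) / ( θ(μ₁τ₁,q)·θ(μ₂τ₂,q) ) ] · F(τ₂/τ₁). Then G(qτ₁, τ₂) + G(τ₁, qτ₂) − (τ₂/τ₁)·G(τ₁, τ₂) = (μ₁ + μ₂)·G(τ₁, τ₂), and G(qτ₁, qτ₂) = μ₁μ₂·G(τ₁, τ₂). -/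
/-- The theta function `θ(a,q) = ∏_{m≥0} (1 − a qᵐ)(1 − q^{m+1} a⁻¹)`. -/
noncomputable def thetaFn (a q : ℂ) : ℂ :=
  ∏' m : ℕ, ((1 - a * q ^ m) * (1 - q ^ (m + 1) * a⁻¹))

/-- The `ℙ¹` vortex sum
`F(z) = Σ_n q^{n(n+1)/2} zⁿ / ∏_{j=1}^{n} (1 − qʲ)(μ₁ − qʲμ₂)`. -/
noncomputable def todaVortexSum (q μ₁ μ₂ z : ℂ) : ℂ :=
  ∑' n : ℕ, q ^ (n * (n + 1) / 2) * z ^ n /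
    ∏ j ∈ Finset.range n, ((1 - q ^ (j + 1)) * (μ₁ - q ^ (j + 1) * μ₂))

/-- The theta-dressed holomorphic block of the 5d pure `U(2)` SYM surface defect
in the decoupling limit:
`G(τ₁,τ₂) = θ(τ₁,q)θ(μ₁,q)θ(τ₂,q)θ(μ₂,q)/(θ(μ₁τ₁,q)θ(μ₂τ₂,q)) · F(τ₂/τ₁)`. -/
noncomputable def todaBlock (q μ₁ μ₂ τ₁ τ₂ : ℂ) : ℂ :=
  thetaFn τ₁ q * thetaFn μ₁ q * thetaFn τ₂ q * thetaFn μ₂ q /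
      (thetaFn (μ₁ * τ₁) q * thetaFn (μ₂ * τ₂) q) *
    todaVortexSum q μ₁ μ₂ (τ₂ / τ₁)


/-!
The quasi-periodicity `θ(qa, q) = -a⁻¹ θ(a, q)`, read off from `θ(a, q) = (a; q)_∞ (q/a; q)_∞`,
shows that shifting `τ₁ ↦ qτ₁` (resp. `τ₂ ↦ qτ₂`) multiplies the theta prefactor of `G` by
`μ₁` (resp. `μ₂`). The second relation follows at once, and the first reduces to the
`q`-difference equation `μ₁ F(z/q) + μ₂ F(qz) - z F(z) = (μ₁ + μ₂) F(z)`. The latter holds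
termwise after shifting the summation index, because the coefficients `c_n` of `F` satisfy
`(1 - q^{n+1}) (μ₁ - q^{n+1} μ₂) c_{n+1} = q^{n+1} c_n`.
-/

open Filter Topology

/-- The infinite `q`-Pochhammer symbol `(b; q)_∞`. -/
noncomputable def qPochhammer (b q : ℂ) : ℂ :=
  ∏' m : ℕ, (1 - b * q ^ m)

section Theta

variable {q : ℂ}

lemma multipliable_one_sub_mul_pow (hq : ‖q‖ < 1) (b : ℂ) :
    Multipliable fun m : ℕ => 1 - b * q ^ m := by
  simpa [sub_eq_add_neg] using multipliable_one_add_of_summable (f := fun m : ℕ => -(b * q ^ m))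
    (by simpa [norm_mul, norm_pow] using
      (summable_geometric_of_lt_one (norm_nonneg q) hq).mul_left ‖b‖)

lemma qPochhammer_eq_one_sub_mul (hq : ‖q‖ < 1) (b : ℂ) :
    qPochhammer b q = (1 - b) * qPochhammer (q * b) q := by
  have hshift : ∀ m : ℕ, 1 - b * q ^ (m + 1) = 1 - q * b * q ^ m := fun m => by ring
  rw [qPochhammer, tprod_eq_zero_mul' ?_]
  · simp only [pow_zero, mul_one, hshift, qPochhammer]
  · simpa only [hshift] using multipliable_one_sub_mul_pow hq (q * b)

lemma thetaFn_eq_qPochhammer_mul (hq : ‖q‖ < 1) (a : ℂ) :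
    thetaFn a q = qPochhammer a q * qPochhammer (q * a⁻¹) q := by
  have hfactor : ∀ m : ℕ, 1 - q ^ (m + 1) * a⁻¹ = 1 - q * a⁻¹ * q ^ m := fun m => by ring
  simp only [thetaFn, qPochhammer, hfactor]
  exact (multipliable_one_sub_mul_pow hq a).tprod_mul (multipliable_one_sub_mul_pow hq _)

lemma thetaFn_q_mul (hq0 : q ≠ 0) (hq : ‖q‖ < 1) {a : ℂ} (ha : a ≠ 0) :
    thetaFn (q * a) q = -a⁻¹ * thetaFn a q := by
  rw [thetaFn_eq_qPochhammer_mul hq, thetaFn_eq_qPochhammer_mul hq, mul_inv,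
    mul_inv_cancel_left₀ hq0, qPochhammer_eq_one_sub_mul hq a,
    qPochhammer_eq_one_sub_mul hq a⁻¹]
  field_simp
  ring

end Theta

noncomputable def vortexTerm (q μ₁ μ₂ z : ℂ) (n : ℕ) : ℂ :=
  q ^ (n * (n + 1) / 2) * z ^ n /
    ∏ j ∈ Finset.range n, ((1 - q ^ (j + 1)) * (μ₁ - q ^ (j + 1) * μ₂))

section Vortex

variable {q μ₁ μ₂ : ℂ}

lemma vortexTerm_zero (z : ℂ) : vortexTerm q μ₁ μ₂ z 0 = 1 := by
  simp [vortexTerm]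

lemma vortexTerm_succ (z : ℂ) (n : ℕ) :
    vortexTerm q μ₁ μ₂ z (n + 1) =
      vortexTerm q μ₁ μ₂ z n *
        (q ^ (n + 1) * z / ((1 - q ^ (n + 1)) * (μ₁ - q ^ (n + 1) * μ₂))) := by
  have htri : (n + 1) * (n + 1 + 1) / 2 = n * (n + 1) / 2 + (n + 1) := by
    rw [show (n + 1) * (n + 1 + 1) = n * (n + 1) + (n + 1) * 2 by ring,
      Nat.add_mul_div_right _ _ two_pos]
  rw [vortexTerm, vortexTerm, htri, pow_add, Finset.prod_range_succ, pow_succ, div_mul_div_comm]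
  ring

lemma vortexTerm_mul_left (c z : ℂ) (n : ℕ) :
    vortexTerm q μ₁ μ₂ (c * z) n = c ^ n * vortexTerm q μ₁ μ₂ z n := by
  rw [vortexTerm, vortexTerm, mul_pow]
  ring

lemma one_sub_pow_succ_ne_zero (hq : ‖q‖ < 1) (n : ℕ) : 1 - q ^ (n + 1) ≠ 0 := by
  refine sub_ne_zero.2 fun h => (?_ : ‖q ^ (n + 1)‖ < 1).ne (by rw [← h, norm_one])
  rw [norm_pow]
  exact pow_lt_one₀ (norm_nonneg q) hq n.succ_ne_zero

/-- The ratio of consecutive terms tends to `0`, because its denominator tends to `μ₁ ≠ 0`. -/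
lemma summable_vortexTerm (hq : ‖q‖ < 1) (hμ₁ : μ₁ ≠ 0) (z : ℂ) :
    Summable (vortexTerm q μ₁ μ₂ z) := by
  have hratio : Tendsto (fun n : ℕ =>
      ‖q ^ (n + 1) * z / ((1 - q ^ (n + 1)) * (μ₁ - q ^ (n + 1) * μ₂))‖) atTop (𝓝 0) := by
    have hpow : Tendsto (fun n : ℕ => q ^ (n + 1)) atTop (𝓝 0) :=
      (tendsto_pow_atTop_nhds_zero_of_norm_lt_one hq).comp (tendsto_add_atTop_nat 1)
    have hcont : ContinuousAt (fun w : ℂ => ‖w * z / ((1 - w) * (μ₁ - w * μ₂))‖) 0 :=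
      (ContinuousAt.div (by fun_prop) (by fun_prop) (by simpa using hμ₁)).norm
    simpa [Function.comp_def] using hcont.tendsto.comp hpow
  refine summable_of_ratio_norm_eventually_le one_half_lt_one ?_
  filter_upwards [hratio.eventually_le_const one_half_pos] with n hn
  rw [vortexTerm_succ, norm_mul, mul_comm]
  exact mul_le_mul_of_nonneg_right hn (norm_nonneg _)

lemma vortexTerm_qDifference (hq0 : q ≠ 0)
    {n : ℕ} (hq1 : 1 - q ^ (n + 1) ≠ 0) (hμ : μ₁ - q ^ (n + 1) * μ₂ ≠ 0) (z : ℂ) :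
    μ₁ * vortexTerm q μ₁ μ₂ (z / q) (n + 1) + μ₂ * vortexTerm q μ₁ μ₂ (q * z) (n + 1) -
      (μ₁ + μ₂) * vortexTerm q μ₁ μ₂ z (n + 1) = z * vortexTerm q μ₁ μ₂ z n := by
  rw [div_eq_inv_mul, vortexTerm_mul_left, vortexTerm_mul_left, inv_pow, vortexTerm_succ]
  field_simp
  ring

lemma todaVortexSum_qDifference (hq0 : q ≠ 0) (hq : ‖q‖ < 1) (hμ₁ : μ₁ ≠ 0)
    (hμ : ∀ n : ℕ, 1 ≤ n → μ₁ ≠ q ^ n * μ₂) (z : ℂ) :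
    μ₁ * todaVortexSum q μ₁ μ₂ (z / q) + μ₂ * todaVortexSum q μ₁ μ₂ (q * z) -
      z * todaVortexSum q μ₁ μ₂ z = (μ₁ + μ₂) * todaVortexSum q μ₁ μ₂ z := by
  have hF (w : ℂ) : HasSum (vortexTerm q μ₁ μ₂ w) (todaVortexSum q μ₁ μ₂ w) :=
    (summable_vortexTerm hq hμ₁ w).hasSum
  have hlhs := (((hF (z / q)).mul_left μ₁).add ((hF (q * z)).mul_left μ₂)).sub
    ((hF z).mul_left (μ₁ + μ₂))
  have hrhs : HasSum (fun n => μ₁ * vortexTerm q μ₁ μ₂ (z / q) n +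
      μ₂ * vortexTerm q μ₁ μ₂ (q * z) n - (μ₁ + μ₂) * vortexTerm q μ₁ μ₂ z n)
      (z * todaVortexSum q μ₁ μ₂ z) := by
    rw [← hasSum_nat_add_iff' 1]
    simp only [Finset.sum_range_one, vortexTerm_zero, mul_one, sub_self, sub_zero]
    exact ((hF z).mul_left z).congr_fun fun n => vortexTerm_qDifference hq0
      (one_sub_pow_succ_ne_zero hq n) (sub_ne_zero.2 (hμ (n + 1) n.succ_pos)) z
  linear_combination hlhs.unique hrhs

end Vortex

noncomputable def thetaDressing (q μ₁ μ₂ τ₁ τ₂ : ℂ) : ℂ :=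
  thetaFn τ₁ q * thetaFn μ₁ q * thetaFn τ₂ q * thetaFn μ₂ q /
    (thetaFn (μ₁ * τ₁) q * thetaFn (μ₂ * τ₂) q)

section Block

variable {q μ₁ μ₂ : ℂ}

lemma todaBlock_eq_thetaDressing_mul (τ₁ τ₂ : ℂ) :
    todaBlock q μ₁ μ₂ τ₁ τ₂ = thetaDressing q μ₁ μ₂ τ₁ τ₂ * todaVortexSum q μ₁ μ₂ (τ₂ / τ₁) :=
  rfl

lemma thetaDressing_q_mul_left (hq0 : q ≠ 0) (hq : ‖q‖ < 1) (hμ₁ : μ₁ ≠ 0) {τ₁ : ℂ}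
    (hτ₁ : τ₁ ≠ 0) (τ₂ : ℂ) :
    thetaDressing q μ₁ μ₂ (q * τ₁) τ₂ = μ₁ * thetaDressing q μ₁ μ₂ τ₁ τ₂ := by
  rw [thetaDressing, thetaDressing, mul_left_comm μ₁ q τ₁, thetaFn_q_mul hq0 hq hτ₁,
    thetaFn_q_mul hq0 hq (mul_ne_zero hμ₁ hτ₁)]
  field_simp

lemma thetaDressing_q_mul_right (hq0 : q ≠ 0) (hq : ‖q‖ < 1) (hμ₂ : μ₂ ≠ 0) (τ₁ : ℂ) {τ₂ : ℂ}
    (hτ₂ : τ₂ ≠ 0) :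
    thetaDressing q μ₁ μ₂ τ₁ (q * τ₂) = μ₂ * thetaDressing q μ₁ μ₂ τ₁ τ₂ := by
  rw [thetaDressing, thetaDressing, mul_left_comm μ₂ q τ₂, thetaFn_q_mul hq0 hq hτ₂,
    thetaFn_q_mul hq0 hq (mul_ne_zero hμ₂ hτ₂)]
  field_simp

end Block

theorem toda_block_eigenfunction_general (q μ₁ μ₂ τ₁ τ₂ : ℂ)
    (hq0 : q ≠ 0) (hq : ‖q‖ < 1)
    (hμ₁ : μ₁ ≠ 0) (hμ₂ : μ₂ ≠ 0) (hτ₁ : τ₁ ≠ 0) (hτ₂ : τ₂ ≠ 0)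
    (hμ : ∀ n : ℕ, 1 ≤ n → μ₁ ≠ q ^ n * μ₂) :
    todaBlock q μ₁ μ₂ (q * τ₁) τ₂ + todaBlock q μ₁ μ₂ τ₁ (q * τ₂) -
        τ₂ / τ₁ * todaBlock q μ₁ μ₂ τ₁ τ₂ =
      (μ₁ + μ₂) * todaBlock q μ₁ μ₂ τ₁ τ₂ ∧
    todaBlock q μ₁ μ₂ (q * τ₁) (q * τ₂) = μ₁ * μ₂ * todaBlock q μ₁ μ₂ τ₁ τ₂ := by
  simp only [todaBlock_eq_thetaDressing_mul, thetaDressing_q_mul_left hq0 hq hμ₁ hτ₁,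
    thetaDressing_q_mul_right hq0 hq hμ₂ _ hτ₂]
  constructor
  · rw [div_mul_eq_div_div_swap, mul_div_assoc]
    linear_combination thetaDressing q μ₁ μ₂ τ₁ τ₂ *
      todaVortexSum_qDifference hq0 hq hμ₁ hμ (τ₂ / τ₁)
  · rw [mul_div_mul_left _ _ hq0]
    ring

/-- The theta-dressed block is an eigenfunction of the two-body open relativistic
(q-)Toda Hamiltonians `p₁ + p₂ − τ₂/τ₁` and `p₁p₂`, with eigenvalues `μ₁ + μ₂`
and `μ₁μ₂`. -/
theorem toda_block_eigenfunction (q μ₁ μ₂ τ₁ τ₂ : ℂ)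
    (hq0 : q ≠ 0) (hq : ‖q‖ < 1)
    (hμ₁ : μ₁ ≠ 0) (hμ₂ : μ₂ ≠ 0) (hτ₁ : τ₁ ≠ 0) (hτ₂ : τ₂ ≠ 0)
    (hμ : ∀ n : ℕ, 1 ≤ n → μ₁ ≠ q ^ n * μ₂)
    (hθ1 : thetaFn (μ₁ * τ₁) q ≠ 0) (hθ2 : thetaFn (μ₂ * τ₂) q ≠ 0) :
    todaBlock q μ₁ μ₂ (q * τ₁) τ₂ + todaBlock q μ₁ μ₂ τ₁ (q * τ₂) -
        τ₂ / τ₁ * todaBlock q μ₁ μ₂ τ₁ τ₂ =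
      (μ₁ + μ₂) * todaBlock q μ₁ μ₂ τ₁ τ₂ ∧
    todaBlock q μ₁ μ₂ (q * τ₁) (q * τ₂) = μ₁ * μ₂ * todaBlock q μ₁ μ₂ τ₁ τ₂ :=
  toda_block_eigenfunction_general q μ₁ μ₂ τ₁ τ₂ hq0 hq hμ₁ hμ₂ hτ₁ hτ₂ hμ
end
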